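/- arXiv:1003.1782 — 6 statements merged into one kernel-verified Lean document; each statement's English description precedes it below -/
import Mathlib

section
/- Fix a = (a_0, a_1, …, a_n) ∈ ℝ_{>0}^{n+1}, a positive integer l, and e = (e_0, e_1, …, e_n) ∈ ℤ_{≥0}^{n+1} with e_0 + e_1 + ⋯ + e_n = l. Then the supremum over all t = (t_0, …, t_n) ∈ ℝ_{>0}^{n+1} of Σ_{i=0}^n e_i log t_i − l·log(Σ_{i=0}^n a_i t_i) equals −l·φ_a(e_0/l, e_1/l, …, e_n/l). -/
/-! With `p = e / l`, the quantity is `l · (Σ pᵢ log tᵢ - log Σ aᵢ tᵢ)`, so it suffices to treat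
a probability vector `p`. Applying `p log y ≤ p log p + y - p` (i.e. `log x ≤ x - 1`) to
`y = aᵢ tᵢ / Σ aⱼ tⱼ` and summing gives the upper bound `Σ p log p - Σ p log a`. It is approached
along `tᵢ = (pᵢ + ε) / aᵢ` as `ε → 0⁺`, for which `Σ aᵢ tᵢ = 1 + (n + 1) ε`. -/

/-- The characteristic function `φ_a(x_0, …, x_n) = −Σ x_i log x_i + Σ x_i log a_i`
(with the convention `0 · log 0 = 0`). -/
noncomputable def charFn {n : ℕ} (a x : Fin (n + 1) → ℝ) : ℝ :=
  -∑ i, x i * Real.log (x i) + ∑ i, x i * Real.log (a i)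

open Real Finset Filter Topology

lemma mul_log_le_mul_log_self_add_sub {p y : ℝ} (hp : 0 ≤ p) (hy : 0 < y) :
    p * log y ≤ p * log p + (y - p) := by
  rcases hp.eq_or_lt with rfl | hp
  · simpa using hy.le
  · have h := mul_le_mul_of_nonneg_left (log_le_sub_one_of_pos (div_pos hy hp)) hp.le
    rw [log_div hy.ne' hp.ne', mul_sub, mul_sub, mul_div_cancel₀ _ hp.ne', mul_one] at h
    linarith

lemma mul_log_le_mul_log_add {p ε : ℝ} (hp : 0 ≤ p) (hε : 0 ≤ ε) :
    p * log p ≤ p * log (p + ε) := by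
  rcases hp.eq_or_lt with rfl | hp
  · simp
  · exact mul_le_mul_of_nonneg_left (log_le_log hp (by linarith)) hp.le

section ProbabilityVector

variable {ι : Type*} [Fintype ι] {p a : ι → ℝ}

theorem sum_mul_log_sub_log_sum_le (hp : ∀ i, 0 ≤ p i) (hp1 : ∑ i, p i = 1)
    (ha : ∀ i, 0 < a i) {t : ι → ℝ} (ht : ∀ i, 0 < t i) :
    ∑ i, p i * log (t i) - log (∑ i, a i * t i) ≤
      ∑ i, p i * log (p i) - ∑ i, p i * log (a i) := by
  have hS : 0 < ∑ i, a i * t i :=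
    sum_pos (fun i _ => mul_pos (ha i) (ht i)) (nonempty_of_sum_ne_zero (hp1 ▸ one_ne_zero))
  set S := ∑ i, a i * t i
  have hsum := sum_le_sum fun i (_ : i ∈ univ) =>
    mul_log_le_mul_log_self_add_sub (hp i) (div_pos (mul_pos (ha i) (ht i)) hS)
  have hleft : ∑ i, p i * log (a i * t i / S) =
      ∑ i, p i * log (a i) + ∑ i, p i * log (t i) - log S := by
    simp_rw [log_div (mul_pos (ha _) (ht _)).ne' hS.ne', log_mul (ha _).ne' (ht _).ne', mul_sub,
      mul_add, sum_sub_distrib, sum_add_distrib, ← sum_mul, hp1, one_mul]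
  have hright : ∑ i, (p i * log (p i) + (a i * t i / S - p i)) = ∑ i, p i * log (p i) := by
    rw [sum_add_distrib, sum_sub_distrib, ← sum_div, div_self hS.ne', hp1, sub_self, add_zero]
  linarith

theorem le_sum_mul_log_add_div_sub_log_sum (hp : ∀ i, 0 ≤ p i) (hp1 : ∑ i, p i = 1)
    (ha : ∀ i, 0 < a i) {ε : ℝ} (hε : 0 < ε) :
    ∑ i, p i * log (p i) - ∑ i, p i * log (a i) - log (1 + Fintype.card ι * ε) ≤
      ∑ i, p i * log ((p i + ε) / a i) - log (∑ i, a i * ((p i + ε) / a i)) := by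
  have hsum : ∑ i, a i * ((p i + ε) / a i) = 1 + Fintype.card ι * ε := by
    simp_rw [mul_div_cancel₀ _ (ha _).ne', sum_add_distrib, hp1, sum_const, card_univ, nsmul_eq_mul]
  have hlog : ∑ i, p i * log ((p i + ε) / a i) =
      ∑ i, p i * log (p i + ε) - ∑ i, p i * log (a i) := by
    simp_rw [log_div (add_pos_of_nonneg_of_pos (hp _) hε).ne' (ha _).ne', mul_sub, sum_sub_distrib]
  rw [hsum, hlog]
  linarith [sum_le_sum fun i (_ : i ∈ univ) => mul_log_le_mul_log_add (hp i) hε.le]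

theorem isLUB_sum_mul_log_sub_log_sum (hp : ∀ i, 0 ≤ p i) (hp1 : ∑ i, p i = 1)
    (ha : ∀ i, 0 < a i) :
    IsLUB {y : ℝ | ∃ t : ι → ℝ, (∀ i, 0 < t i) ∧
        y = ∑ i, p i * log (t i) - log (∑ i, a i * t i)}
      (∑ i, p i * log (p i) - ∑ i, p i * log (a i)) := by
  refine ⟨?_, fun b hb => ?_⟩
  · rintro y ⟨t, ht, rfl⟩
    exact sum_mul_log_sub_log_sum_le hp hp1 ha ht
  · set M := ∑ i, p i * log (p i) - ∑ i, p i * log (a i)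
    have hlim : Tendsto (fun ε : ℝ => M - log (1 + Fintype.card ι * ε)) (𝓝[>] 0) (𝓝 M) := by
      have h1 : Tendsto (fun ε : ℝ => 1 + Fintype.card ι * ε) (𝓝 0) (𝓝 1) :=
        (by fun_prop : Continuous fun ε : ℝ => 1 + Fintype.card ι * ε).tendsto' 0 1 (by simp)
      simpa using tendsto_nhdsWithin_of_tendsto_nhds ((h1.log one_ne_zero).const_sub M)
    refine le_of_tendsto hlim (eventually_nhdsWithin_of_forall fun ε (hε : 0 < ε) => ?_)
    exact (le_sum_mul_log_add_div_sub_log_sum hp hp1 ha hε).trans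
      (hb ⟨_, fun i => div_pos (add_pos_of_nonneg_of_pos (hp i) hε) (ha i), rfl⟩)

end ProbabilityVector

/-- Proposition 1.3(1): the supremum over positive `t` of
`Σ e_i log t_i − l log(Σ a_i t_i)` equals `−l · φ_a(e_0/l, …, e_n/l)`. -/
theorem sup_monomial_norm (n : ℕ) (a : Fin (n + 1) → ℝ) (ha : ∀ i, 0 < a i)
    (l : ℕ) (hl : 1 ≤ l) (e : Fin (n + 1) → ℕ) (he : ∑ i, e i = l) :
    IsLUB {y : ℝ | ∃ t : Fin (n + 1) → ℝ, (∀ i, 0 < t i) ∧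
        y = ∑ i, (e i : ℝ) * Real.log (t i) - (l : ℝ) * Real.log (∑ i, a i * t i)}
      (-(l : ℝ) * charFn a (fun i => (e i : ℝ) / (l : ℝ))) := by
  have hl0 : (0 : ℝ) < l := by exact_mod_cast hl
  set p : Fin (n + 1) → ℝ := fun i => (e i : ℝ) / l
  have hp1 : ∑ i, p i = 1 := by
    rw [← sum_div, ← Nat.cast_sum, he, div_self hl0.ne']
  have hscale (t : Fin (n + 1) → ℝ) :
      ∑ i, (e i : ℝ) * log (t i) - l * log (∑ i, a i * t i) =
        l * (∑ i, p i * log (t i) - log (∑ i, a i * t i)) := by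
    rw [mul_sub, mul_sum]
    simp_rw [p, ← mul_assoc, mul_div_cancel₀ _ hl0.ne']
  have hset : {y : ℝ | ∃ t : Fin (n + 1) → ℝ, (∀ i, 0 < t i) ∧
        y = ∑ i, (e i : ℝ) * log (t i) - l * log (∑ i, a i * t i)} =
      (fun y => (l : ℝ) * y) '' {y | ∃ t : Fin (n + 1) → ℝ, (∀ i, 0 < t i) ∧
        y = ∑ i, p i * log (t i) - log (∑ i, a i * t i)} := by
    ext y
    constructor
    · rintro ⟨t, ht, rfl⟩
      exact ⟨_, ⟨t, ht, rfl⟩, (hscale t).symm⟩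
    · rintro ⟨_, ⟨t, ht, rfl⟩, rfl⟩
      exact ⟨t, ht, (hscale t).symm⟩
  have hval : -(l : ℝ) * charFn a p = l * (∑ i, p i * log (p i) - ∑ i, p i * log (a i)) := by
    unfold charFn
    ring
  rw [hset, hval]
  exact (isLUB_sum_mul_log_sub_log_sum (fun i => by positivity) hp1 ha).mul_left hl0.le
end

section
/- Fix a = (a_0, a_1, …, a_n) ∈ ℝ_{>0}^{n+1}, a positive integer l, and e = (e_1, …, e_n) ∈ ℤ_{≥0}^n with e_1 + ⋯ + e_n ≤ l; set e_0 = l − e_1 − ⋯ − e_n. Then ∫_{ℝ_{>0}^n} n!·a_0·a_1⋯a_n · x_1^{e_1}⋯x_n^{e_n} / (a_0 + a_1 x_1 + ⋯ + a_n x_n)^{n+l+1} dx_1⋯dx_n = 1 / ( C(n+l, n) · (l! / (e_0!·e_1!⋯e_n!)) · a_0^{e_0}·a_1^{e_1}⋯a_n^{e_n} ), where C(n+l, n) is the binomial coefficient. -/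
/-!
In one variable, integrating `x ^ (e + 1) / (c + a x) ^ (e + k + 2)` by parts gives the reduction
`I(e + 1) = (e + 1) / ((e + k + 2) a) · I(e)`, and `I(0) = 1 / ((k + 1) a c ^ (k + 1))`, so
`∫₀^∞ x ^ e / (c + a x) ^ (e + k + 2) dx = e! k! / ((e + k + 1)! a ^ (e + 1) c ^ (k + 1))`.
In `n + 1` variables, Fubini and the case `n` with `c` replaced by `c + a₀ x₀` and `k` by
`e₀ + k + 1` leave a one-variable integral of this shape in `x₀`. The theorem is the case
`c = a₀`, `k = l - ∑ eᵢ`, with `(n + l)! = C(n + l, n) n! l!`.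
-/

open MeasureTheory Set Filter Topology
open scoped ENNReal Nat

section Affine

variable {c a : ℝ}

theorem hasDerivAt_inv_affine_pow (p : ℕ) {x : ℝ} (hx : c + a * x ≠ 0) :
    HasDerivAt (fun y => ((c + a * y) ^ p)⁻¹) (-(p * a) / (c + a * x) ^ (p + 1)) x := by
  refine ((((hasDerivAt_id x).const_mul a).const_add c).pow p |>.inv
    (pow_ne_zero p hx)).congr_deriv ?_
  rcases p with _ | p
  · simp
  · simp only [id, Pi.pow_apply, mul_one, Nat.cast_add, Nat.cast_one, add_tsub_cancel_right]
    field_simp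
    ring

theorem hasDerivAt_antideriv_inv_affine_pow (ha : a ≠ 0) (k : ℕ) {x : ℝ} (hx : c + a * x ≠ 0) :
    HasDerivAt (fun y => -(((k + 1) * a)⁻¹ * ((c + a * y) ^ (k + 1))⁻¹))
      ((c + a * x) ^ (k + 2))⁻¹ x := by
  refine ((hasDerivAt_inv_affine_pow (k + 1) hx).const_mul _ |>.neg).congr_deriv ?_
  push_cast
  field_simp

theorem hasDerivAt_pow_div_affine_pow (e p : ℕ) {x : ℝ} (hx : c + a * x ≠ 0) :
    HasDerivAt (fun y => y ^ (e + 1) / (c + a * y) ^ p)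
      ((e + 1) * (x ^ e / (c + a * x) ^ p) - p * a * (x ^ (e + 1) / (c + a * x) ^ (p + 1))) x := by
  refine ((hasDerivAt_pow (e + 1) x).mul (hasDerivAt_inv_affine_pow p hx)).congr_deriv ?_
  push_cast
  ring

theorem pow_div_affine_pow_le (hc : 0 < c) (ha : 0 < a) {x : ℝ} (hx : 0 ≤ x) (e p : ℕ) :
    x ^ e / (c + a * x) ^ (e + p) ≤ (a ^ e)⁻¹ * ((c + a * x) ^ p)⁻¹ := by
  have hD : 0 < c + a * x := by positivity
  have hxD : (a * x) ^ e ≤ (c + a * x) ^ e := pow_le_pow_left₀ (by positivity) (by linarith) e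
  rw [pow_add, div_le_iff₀ (by positivity)]
  field_simp
  linarith [mul_pow a x e]

theorem tendsto_inv_affine_pow_atTop (ha : 0 < a) (p : ℕ) :
    Tendsto (fun x => ((c + a * x) ^ (p + 1))⁻¹) atTop (𝓝 0) :=
  tendsto_inv_atTop_zero.comp <| (tendsto_pow_atTop p.succ_ne_zero).comp <|
    tendsto_atTop_add_const_left _ c (tendsto_id.const_mul_atTop ha)

theorem tendsto_pow_div_affine_pow_atTop (hc : 0 < c) (ha : 0 < a) (e k : ℕ) :
    Tendsto (fun x => x ^ e / (c + a * x) ^ (e + k + 1)) atTop (𝓝 0) := by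
  have hbound := (tendsto_inv_affine_pow_atTop (c := c) ha k).const_mul (a ^ e)⁻¹
  rw [mul_zero] at hbound
  refine squeeze_zero' ?_ ?_ hbound
  · filter_upwards [eventually_ge_atTop 0] with x hx
    have : 0 < c + a * x := by positivity
    positivity
  · filter_upwards [eventually_ge_atTop 0] with x hx
    rw [add_assoc]
    exact pow_div_affine_pow_le hc ha hx e (k + 1)

theorem integrableOn_Ioi_inv_affine_pow (hc : 0 < c) (ha : 0 < a) (k : ℕ) :
    IntegrableOn (fun x => ((c + a * x) ^ (k + 2))⁻¹) (Ioi 0) :=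
  integrableOn_Ioi_deriv_of_nonneg'
    (fun x (hx : 0 ≤ x) => hasDerivAt_antideriv_inv_affine_pow ha.ne' k (by positivity))
    (fun x (hx : 0 < x) => by positivity)
    ((tendsto_inv_affine_pow_atTop ha k).const_mul _ |>.neg)

theorem integral_Ioi_inv_affine_pow (hc : 0 < c) (ha : 0 < a) (k : ℕ) :
    ∫ x in Ioi 0, ((c + a * x) ^ (k + 2))⁻¹ = ((k + 1) * a * c ^ (k + 1))⁻¹ := by
  rw [integral_Ioi_of_hasDerivAt_of_nonneg'
    (fun x (hx : 0 ≤ x) => hasDerivAt_antideriv_inv_affine_pow ha.ne' k (by positivity))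
    (fun x (hx : 0 < x) => by positivity)
    ((tendsto_inv_affine_pow_atTop ha k).const_mul _ |>.neg)]
  simp only [mul_zero, add_zero, mul_inv]
  ring

theorem integrableOn_Ioi_pow_div_affine_pow (hc : 0 < c) (ha : 0 < a) (e k : ℕ) :
    IntegrableOn (fun x => x ^ e / (c + a * x) ^ (e + k + 2)) (Ioi 0) := by
  refine ((integrableOn_Ioi_inv_affine_pow hc ha k).const_mul (a ^ e)⁻¹).mono'
    (by fun_prop : Measurable _).aestronglyMeasurable ?_
  filter_upwards [ae_restrict_mem measurableSet_Ioi] with x (hx : 0 < x)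
  rw [Real.norm_of_nonneg (by positivity), add_assoc]
  exact pow_div_affine_pow_le hc ha hx.le e (k + 2)

theorem integral_Ioi_pow_div_affine_pow_succ (hc : 0 < c) (ha : 0 < a) (e k : ℕ) :
    ∫ x in Ioi 0, x ^ (e + 1) / (c + a * x) ^ (e + 1 + k + 2) =
      (e + 1) / ((e + k + 2) * a) * ∫ x in Ioi 0, x ^ e / (c + a * x) ^ (e + k + 2) := by
  have hint₁ := (integrableOn_Ioi_pow_div_affine_pow hc ha e k).const_mul ((e : ℝ) + 1)
  have hint₂ := (integrableOn_Ioi_pow_div_affine_pow hc ha (e + 1) k).const_mul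
    (((e + k + 2 : ℕ) : ℝ) * a)
  have hlim := tendsto_pow_div_affine_pow_atTop hc ha (e + 1) k
  rw [show e + 1 + k + 2 = e + k + 2 + 1 by ring] at hint₂ ⊢
  rw [show e + 1 + k + 1 = e + k + 2 by ring] at hlim
  have hparts := integral_Ioi_of_hasDerivAt_of_tendsto'
    (fun x (hx : 0 ≤ x) => hasDerivAt_pow_div_affine_pow e (e + k + 2) (by positivity))
    (hint₁.sub hint₂) hlim
  rw [integral_sub hint₁ hint₂, integral_const_mul, integral_const_mul] at hparts
  push_cast at hparts
  simp only [zero_pow (Nat.succ_ne_zero e), zero_div, sub_zero] at hparts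
  field_simp
  linarith

theorem integral_Ioi_pow_div_affine_pow (hc : 0 < c) (ha : 0 < a) (e k : ℕ) :
    ∫ x in Ioi 0, x ^ e / (c + a * x) ^ (e + k + 2) =
      e ! * k ! / ((e + k + 1)! * a ^ (e + 1) * c ^ (k + 1)) := by
  induction e with
  | zero =>
    simp only [pow_zero, one_div, zero_add, integral_Ioi_inv_affine_pow hc ha k,
      Nat.factorial_zero, Nat.factorial_succ, Nat.cast_one, Nat.cast_mul, pow_one]
    field_simp
    push_cast
    ring
  | succ e ih =>
    rw [integral_Ioi_pow_div_affine_pow_succ hc ha e k, ih,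
      show e + 1 + k + 1 = e + k + 1 + 1 by ring, Nat.factorial_succ (e + k + 1),
      Nat.factorial_succ e]
    push_cast
    field_simp
    ring

end Affine

theorem lintegral_pi_fin_succ {α : Type*} [MeasurableSpace α] {n : ℕ}
    (μ : Fin (n + 1) → Measure α) [∀ i, SigmaFinite (μ i)] {f : (Fin (n + 1) → α) → ℝ≥0∞}
    (hf : Measurable f) :
    ∫⁻ x, f x ∂Measure.pi μ =
      ∫⁻ t, ∫⁻ y, f (Fin.cons t y) ∂Measure.pi (fun i => μ i.succ) ∂μ 0 := by
  rw [← (measurePreserving_piFinSuccAbove μ 0).symm.lintegral_comp hf]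
  exact (lintegral_prod _ (hf.comp (MeasurableEquiv.measurable _)).aemeasurable).trans (by
    simp [MeasurableEquiv.piFinSuccAbove_symm_apply, Fin.insertNthEquiv, Fin.insertNth_zero'])

theorem lintegral_pi_Ioi_monomial_div_affine_pow (n : ℕ) {c : ℝ} (hc : 0 < c) {a : Fin n → ℝ}
    (ha : ∀ i, 0 < a i) (e : Fin n → ℕ) (k : ℕ) :
    ∫⁻ x, ENNReal.ofReal ((∏ i, x i ^ e i) / (c + ∑ i, a i * x i) ^ (∑ i, e i + n + k + 1))
        ∂Measure.pi (fun _ => volume.restrict (Ioi 0)) =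
      ENNReal.ofReal ((∏ i, ((e i)! : ℝ)) * k ! /
        ((∑ i, e i + n + k)! * c ^ (k + 1) * ∏ i, a i ^ (e i + 1))) := by
  induction n generalizing c k with
  | zero =>
    simp only [Finset.univ_eq_empty, Finset.prod_empty, Finset.sum_empty, add_zero, zero_add,
      one_div, lintegral_const, Measure.pi_empty_univ, mul_one, one_mul]
    field_simp
  | succ n ih =>
    rw [lintegral_pi_fin_succ _ (by fun_prop)]
    simp only [Fin.prod_univ_succ, Fin.sum_univ_succ, Fin.cons_zero, Fin.cons_succ]
    set C : ℝ := (∏ i : Fin n, ((e i.succ)! : ℝ)) * (e 0 + k + 1)! /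
      ((∑ i : Fin n, e i.succ + n + (e 0 + k + 1))! * ∏ i : Fin n, a i.succ ^ (e i.succ + 1))
    have hinner : ∀ t ∈ Ioi (0 : ℝ),
        ∫⁻ y, ENNReal.ofReal (t ^ e 0 * (∏ i : Fin n, y i ^ e i.succ) /
          (c + (a 0 * t + ∑ i : Fin n, a i.succ * y i)) ^
            (e 0 + ∑ i : Fin n, e i.succ + (n + 1) + k + 1))
          ∂Measure.pi (fun _ => volume.restrict (Ioi 0)) =
        ENNReal.ofReal (C * (t ^ e 0 / (c + a 0 * t) ^ (e 0 + k + 2))) := by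
      intro t (ht : 0 < t)
      have hct : 0 < c + a 0 * t := by have := ha 0; positivity
      have hexp : e 0 + ∑ i : Fin n, e i.succ + (n + 1) + k + 1 =
          ∑ i : Fin n, e i.succ + n + (e 0 + k + 1) + 1 := by ring
      simp_rw [hexp, ← add_assoc c, mul_div_assoc, ENNReal.ofReal_mul (by positivity : 0 ≤ t ^ e 0)]
      rw [lintegral_const_mul _ (by fun_prop), ih hct (fun i => ha i.succ),
        ← ENNReal.ofReal_mul (by positivity)]
      congr 1
      simp only [C]
      field_simp
    have hC : 0 ≤ C := by
      have : 0 < ∏ i : Fin n, a i.succ ^ (e i.succ + 1) :=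
        Finset.prod_pos fun i _ => pow_pos (ha _) _
      positivity
    have hnonneg : 0 ≤ᵐ[volume.restrict (Ioi 0)]
        fun t => C * (t ^ e 0 / (c + a 0 * t) ^ (e 0 + k + 2)) := by
      filter_upwards [ae_restrict_mem measurableSet_Ioi] with t (ht : 0 < t)
      have := ha 0
      positivity
    rw [setLIntegral_congr_fun measurableSet_Ioi hinner, ← ofReal_integral_eq_lintegral_ofReal
      ((integrableOn_Ioi_pow_div_affine_pow hc (ha 0) (e 0) k).const_mul C) hnonneg,
      integral_const_mul, integral_Ioi_pow_div_affine_pow hc (ha 0)]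
    congr 1
    simp only [C]
    rw [show ∑ i : Fin n, e i.succ + n + (e 0 + k + 1) = e 0 + ∑ i : Fin n, e i.succ + (n + 1) + k
      by ring]
    field_simp

theorem integral_pi_Ioi_monomial_div_affine_pow (n : ℕ) {c : ℝ} (hc : 0 < c) {a : Fin n → ℝ}
    (ha : ∀ i, 0 < a i) (e : Fin n → ℕ) (k : ℕ) :
    ∫ x in univ.pi (fun _ : Fin n => Ioi (0 : ℝ)),
        (∏ i, x i ^ e i) / (c + ∑ i, a i * x i) ^ (∑ i, e i + n + k + 1) =
      (∏ i, ((e i)! : ℝ)) * k ! / ((∑ i, e i + n + k)! * c ^ (k + 1) * ∏ i, a i ^ (e i + 1)) := by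
  have hnonneg : 0 ≤ᵐ[volume.restrict (univ.pi fun _ : Fin n => Ioi (0 : ℝ))]
      fun x => (∏ i, x i ^ e i) / (c + ∑ i, a i * x i) ^ (∑ i, e i + n + k + 1) := by
    filter_upwards [ae_restrict_mem (MeasurableSet.univ_pi fun _ => measurableSet_Ioi)] with x hx
    have hx : ∀ i, 0 < x i := fun i => hx i (mem_univ i)
    have : 0 ≤ ∑ i, a i * x i := Finset.sum_nonneg fun i _ => (mul_pos (ha i) (hx i)).le
    have : 0 ≤ ∏ i, x i ^ e i := Finset.prod_nonneg fun i _ => pow_nonneg (hx i).le _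
    positivity
  rw [integral_eq_lintegral_of_nonneg_ae hnonneg (by fun_prop : Measurable _).aestronglyMeasurable,
    volume_pi, Measure.restrict_pi_pi, lintegral_pi_Ioi_monomial_div_affine_pow n hc ha e k,
    ENNReal.toReal_ofReal]
  have : 0 < ∏ i, a i ^ (e i + 1) := Finset.prod_pos fun i _ => pow_pos (ha i) _
  positivity

theorem integral_monomial_L2_norm_general (n : ℕ) (a0 : ℝ) (ha0 : 0 < a0)
    (a : Fin n → ℝ) (ha : ∀ i, 0 < a i)
    (l : ℕ) (e : Fin n → ℕ) (he : ∑ i, e i ≤ l) :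
    ∫ x in Set.univ.pi (fun _ : Fin n => Set.Ioi (0 : ℝ)),
        (Nat.factorial n : ℝ) * a0 * (∏ i, a i) * (∏ i, x i ^ e i) /
          (a0 + ∑ i, a i * x i) ^ (n + l + 1) =
      ((Nat.factorial (l - ∑ i, e i) : ℝ) * ∏ i, (Nat.factorial (e i) : ℝ)) /
        ((Nat.choose (n + l) n : ℝ) * (Nat.factorial l : ℝ) *
          a0 ^ (l - ∑ i, e i) * ∏ i, a i ^ (e i)) := by
  obtain ⟨k, rfl⟩ := Nat.exists_eq_add_of_le he
  have hexp : n + (∑ i, e i + k) + 1 = ∑ i, e i + n + k + 1 := by ring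
  have hfact : ((∑ i, e i + n + k)! : ℝ) =
      (n + (∑ i, e i + k)).choose n * n ! * (∑ i, e i + k)! := by
    rw [show ∑ i, e i + n + k = ∑ i, e i + k + n by ring,
      ← Nat.add_choose_mul_factorial_mul_factorial, add_comm _ n]
    push_cast
    ring
  simp_rw [hexp, mul_div_assoc]
  rw [integral_const_mul, integral_pi_Ioi_monomial_div_affine_pow n ha0 ha e k, hfact,
    Nat.add_sub_cancel_left]
  simp only [pow_succ, Finset.prod_mul_distrib]
  have : 0 < ∏ i, a i := Finset.prod_pos fun i _ => ha i
  have : 0 < ∏ i, a i ^ e i := Finset.prod_pos fun i _ => pow_pos (ha i) _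
  field_simp

/-- Proposition 1.3(2): the multiple integral over the positive orthant
`∫ n! a_0⋯a_n x_1^{e_1}⋯x_n^{e_n}/(a_0 + a_1x_1 + ⋯ + a_nx_n)^{n+l+1} dx
  = 1/( C(n+l,n) · (l!/(e_0!⋯e_n!)) · a_0^{e_0}⋯a_n^{e_n} )`,
where `e_0 = l − e_1 − ⋯ − e_n` (the right-hand side is written in the
equivalent form `(e_0! ∏ e_i!)/(C(n+l,n) · l! · a_0^{e_0} ∏ a_i^{e_i})`). -/
theorem integral_monomial_L2_norm (n : ℕ) (a0 : ℝ) (ha0 : 0 < a0)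
    (a : Fin n → ℝ) (ha : ∀ i, 0 < a i)
    (l : ℕ) (hl : 1 ≤ l) (e : Fin n → ℕ) (he : ∑ i, e i ≤ l) :
    ∫ x in Set.univ.pi (fun _ : Fin n => Set.Ioi (0 : ℝ)),
        (Nat.factorial n : ℝ) * a0 * (∏ i, a i) * (∏ i, x i ^ e i) /
          (a0 + ∑ i, a i * x i) ^ (n + l + 1) =
      ((Nat.factorial (l - ∑ i, e i) : ℝ) * ∏ i, (Nat.factorial (e i) : ℝ)) /
        ((Nat.choose (n + l) n : ℝ) * (Nat.factorial l : ℝ) *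
          a0 ^ (l - ∑ i, e i) * ∏ i, a i ^ (e i)) :=
  integral_monomial_L2_norm_general n a0 ha0 a ha l e he
end

section
/- Fix a = (a_0, a_1, …, a_n) ∈ ℝ_{>0}^{n+1} and set A_n = (n+2)/2 and B_n = (n+2)·log(√(2π)) + (n+2)/12. Then for every integer l ≥ 1 and every (k_0, …, k_n) ∈ ℤ_{≥0}^{n+1} with k_0 + ⋯ + k_n = l, one has | (1/l)·log( (l!/(k_0!⋯k_n!)) · a_0^{k_0}⋯a_n^{k_n} ) − φ_a(k_0/l, …, k_n/l) | ≤ (1/l)·(A_n·log l + B_n). -/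
open Real Stirling Finset

namespace Stirling

/-- The upper half of Stirling's formula with Robbins' remainder,
`m! ≤ √(2πm) (m/e)^m e^{1/(12m)}`. -/
theorem log_stirlingSeq_le {m : ℕ} (hm : m ≠ 0) :
    log (stirlingSeq m) ≤ log √π + 1 / (12 * m) := by
  set g : ℕ → ℝ := fun j => log (stirlingSeq (j + 1)) - 1 / (12 * (j + 1)) with hg
  -- Robbins' bound `1 / (12 j (j + 1))` telescopes, so `g` increases to its limit `log √π`.
  have hmono : Monotone g := monotone_nat_of_le_succ fun j => by
    have h := log_stirlingSeq_sdiff_le (j + 1)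
    have hsplit : (1 : ℝ) / (12 * ↑(j + 1) * (↑(j + 1) + 1)) =
        1 / (12 * ((j : ℝ) + 1)) - 1 / (12 * (↑(j + 1) + 1)) := by
      push_cast; field_simp; ring
    simp only [hg]
    push_cast at h hsplit ⊢
    linarith
  have hlim : Filter.Tendsto g Filter.atTop (nhds (log √π)) := by
    have hs := (tendsto_stirlingSeq_sqrt_pi.comp (Filter.tendsto_add_atTop_nat 1)).log
      (by positivity)
    have hr := tendsto_one_div_add_atTop_nhds_zero_nat.const_mul (1 / 12 : ℝ)
    rw [mul_zero] at hr
    convert hs.sub hr using 2 with j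
    · simp only [hg, Function.comp_apply]
      field_simp
    · simp
  obtain ⟨j, rfl⟩ := Nat.exists_eq_succ_of_ne_zero hm
  have := hmono.ge_of_tendsto hlim j
  simp only [hg] at this
  push_cast
  linarith

end Stirling

noncomputable def stirlingRemainder (m : ℕ) : ℝ :=
  log m.factorial - (m * log m - m)

@[simp]
theorem stirlingRemainder_zero : stirlingRemainder 0 = 0 := by
  simp [stirlingRemainder]

theorem log_sqrt_two_pi_nonneg : 0 ≤ log √(2 * π) :=
  log_nonneg (one_le_sqrt.mpr (by linarith [pi_gt_three]))

theorem half_log_add_log_sqrt_two_pi_le_stirlingRemainder {m : ℕ} (hm : m ≠ 0) :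
    log m / 2 + log √(2 * π) ≤ stirlingRemainder m := by
  have h := le_log_factorial_stirling hm
  rw [log_sqrt (by positivity)]
  unfold stirlingRemainder
  linarith

theorem stirlingRemainder_le {m : ℕ} (hm : m ≠ 0) :
    stirlingRemainder m ≤ log m / 2 + log √(2 * π) + 1 / (12 * m) := by
  have hm' : (m : ℝ) ≠ 0 := Nat.cast_ne_zero.mpr hm
  have hformula := log_stirlingSeq_formula m
  rw [log_mul two_ne_zero hm', log_div hm' (exp_ne_zero 1), log_exp] at hformula
  have hbound := log_stirlingSeq_le hm
  rw [log_sqrt pi_pos.le] at hbound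
  rw [log_sqrt (by positivity), log_mul two_ne_zero pi_ne_zero]
  unfold stirlingRemainder
  linarith

theorem stirlingRemainder_nonneg (m : ℕ) : 0 ≤ stirlingRemainder m := by
  rcases eq_or_ne m 0 with rfl | hm
  · rw [stirlingRemainder_zero]
  · have := half_log_add_log_sqrt_two_pi_le_stirlingRemainder hm
    linarith [log_natCast_nonneg m, log_sqrt_two_pi_nonneg]

theorem stirlingRemainder_le_of_le {m l : ℕ} (h : m ≤ l) :
    stirlingRemainder m ≤ log l / 2 + log √(2 * π) + 1 / 12 := by
  rcases eq_or_ne m 0 with rfl | hm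
  · rw [stirlingRemainder_zero]
    linarith [log_natCast_nonneg l, log_sqrt_two_pi_nonneg]
  · have hm1 : (1 : ℝ) ≤ m := Nat.one_le_cast.mpr (Nat.one_le_iff_ne_zero.mpr hm)
    have hlog : log m ≤ log l := log_le_log (by linarith) (by exact_mod_cast h)
    have hinv : 1 / (12 * (m : ℝ)) ≤ 1 / 12 :=
      one_div_le_one_div_of_le (by norm_num) (by linarith)
    linarith [stirlingRemainder_le hm]

theorem abs_stirlingRemainder_sub_sum_le {ι : Type*} [Fintype ι] (k : ι → ℕ) :
    |stirlingRemainder (∑ i, k i) - ∑ i, stirlingRemainder (k i)| ≤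
      (Fintype.card ι + 1) * (log ↑(∑ i, k i) / 2 + log √(2 * π) + 1 / 12) := by
  set l := ∑ i, k i
  have hsum : ∑ i, stirlingRemainder (k i) ≤
      Fintype.card ι * (log l / 2 + log √(2 * π) + 1 / 12) := by
    simpa only [sum_const, card_univ, nsmul_eq_mul] using
      sum_le_sum fun i (_ : i ∈ univ) =>
        stirlingRemainder_le_of_le (single_le_sum (fun j _ => Nat.zero_le (k j)) (mem_univ i))
  -- `|x - y| ≤ x + y` for nonnegative `x` and `y`
  rw [abs_le]
  constructor <;>
    linarith [stirlingRemainder_le_of_le le_rfl (l := l), stirlingRemainder_nonneg l,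
      sum_nonneg fun i (_ : i ∈ univ) => stirlingRemainder_nonneg (k i)]

section CharFn

variable {n : ℕ} (k : Fin (n + 1) → ℕ) {l : ℕ}

theorem charFn_natCast_div (a : Fin (n + 1) → ℝ) (hk : ∑ i, k i = l) :
    charFn a (fun i => (k i : ℝ) / l) =
      1 / l * (l * log l - ∑ i, k i * log (k i) + ∑ i, k i * log (a i)) := by
  have hterm (i : Fin (n + 1)) :
      (k i : ℝ) / l * log ((k i : ℝ) / l) = 1 / l * (k i * log (k i) - k i * log l) := by
    rcases eq_or_ne (k i) 0 with hki | hki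
    · simp [hki]
    have hl : l ≠ 0 := (Nat.pos_of_ne_zero hki).trans_le
      (hk ▸ single_le_sum (fun j _ => Nat.zero_le (k j)) (mem_univ i)) |>.ne'
    rw [log_div (by exact_mod_cast hki) (by exact_mod_cast hl)]
    ring
  have hsum : (l : ℝ) = ∑ i, (k i : ℝ) := by rw [← hk, Nat.cast_sum]
  have hent : ∑ i, (k i : ℝ) / l * log ((k i : ℝ) / l) =
      1 / l * (∑ i, k i * log (k i) - l * log l) := by
    rw [sum_congr rfl fun i _ => hterm i, ← mul_sum, sum_sub_distrib, ← sum_mul, ← hsum]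
  have hcross : ∑ i, (k i : ℝ) / l * log (a i) = 1 / l * ∑ i, k i * log (a i) := by
    rw [mul_sum]
    exact sum_congr rfl fun i _ => by ring
  rw [charFn, hent, hcross]
  ring

theorem one_div_mul_log_multinomial_sub_charFn {a : Fin (n + 1) → ℝ} (ha : ∀ i, a i ≠ 0)
    (hk : ∑ i, k i = l) :
    1 / (l : ℝ) * log (((l.factorial : ℝ) / ∏ i, ((k i).factorial : ℝ)) * ∏ i, a i ^ k i) -
        charFn a (fun i => (k i : ℝ) / l) =
      1 / l * (stirlingRemainder l - ∑ i, stirlingRemainder (k i)) := by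
  have hfact (m : ℕ) : (m.factorial : ℝ) ≠ 0 := by positivity
  have hlog : log (((l.factorial : ℝ) / ∏ i, ((k i).factorial : ℝ)) * ∏ i, a i ^ k i) =
      log l.factorial - ∑ i, log (k i).factorial + ∑ i, k i * log (a i) := by
    rw [log_mul (div_ne_zero (hfact l) (prod_ne_zero_iff.mpr fun i _ => hfact _))
        (prod_ne_zero_iff.mpr fun i _ => pow_ne_zero _ (ha i)),
      log_div (hfact l) (prod_ne_zero_iff.mpr fun i _ => hfact _),
      log_prod fun i _ => hfact _, log_prod fun i _ => pow_ne_zero _ (ha i)]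
    simp only [log_pow]
  have hsum : (l : ℝ) = ∑ i, (k i : ℝ) := by rw [← hk, Nat.cast_sum]
  rw [hlog, charFn_natCast_div k a hk]
  simp only [stirlingRemainder, sum_sub_distrib, ← hsum]
  ring

end CharFn

theorem stirling_multinomial_estimate_general (n : ℕ) (a : Fin (n + 1) → ℝ)
    (ha : ∀ i, 0 < a i) (l : ℕ)
    (k : Fin (n + 1) → ℕ) (hk : ∑ i, k i = l) :
    |(1 / (l : ℝ)) *
        Real.log (((Nat.factorial l : ℝ) / ∏ i, (Nat.factorial (k i) : ℝ)) *
          ∏ i, a i ^ (k i)) -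
      charFn a (fun i => (k i : ℝ) / (l : ℝ))| ≤
    (1 / (l : ℝ)) *
      (((n : ℝ) + 2) / 2 * Real.log l +
        (((n : ℝ) + 2) * Real.log (Real.sqrt (2 * Real.pi)) + ((n : ℝ) + 2) / 12)) := by
  rw [one_div_mul_log_multinomial_sub_charFn k (fun i => (ha i).ne') hk, abs_mul,
    abs_of_nonneg (by positivity)]
  gcongr
  calc |stirlingRemainder l - ∑ i, stirlingRemainder (k i)|
      ≤ (Fintype.card (Fin (n + 1)) + 1) * (log l / 2 + log √(2 * π) + 1 / 12) := by
        simpa only [hk] using abs_stirlingRemainder_sub_sum_le k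
    _ = _ := by
        rw [Fintype.card_fin]
        push_cast
        ring

/-- Lemma 1.4: the uniform Stirling-type estimate with `A_n = (n+2)/2` and
`B_n = (n+2)·log √(2π) + (n+2)/12`. -/
theorem stirling_multinomial_estimate (n : ℕ) (a : Fin (n + 1) → ℝ)
    (ha : ∀ i, 0 < a i) (l : ℕ) (hl : 1 ≤ l)
    (k : Fin (n + 1) → ℕ) (hk : ∑ i, k i = l) :
    |(1 / (l : ℝ)) *
        Real.log (((Nat.factorial l : ℝ) / ∏ i, (Nat.factorial (k i) : ℝ)) *
          ∏ i, a i ^ (k i)) -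
      charFn a (fun i => (k i : ℝ) / (l : ℝ))| ≤
    (1 / (l : ℝ)) *
      (((n : ℝ) + 2) / 2 * Real.log l +
        (((n : ℝ) + 2) * Real.log (Real.sqrt (2 * Real.pi)) + ((n : ℝ) + 2) / 12)) :=
  stirling_multinomial_estimate_general n a ha l k hk
end

section
/- Let Θ be a compact convex subset of ℝ^n with vol(Θ) > 0. For each integer l ≥ 1 let A_l = (a_{e,e'})_{e,e' ∈ lΘ ∩ ℤ^n} be a positive definite symmetric real matrix indexed by lΘ ∩ ℤ^n which is diagonal with all diagonal entries at most 1 (i.e., a_{e,e'} = 0 for e ≠ e' and 0 < a_{e,e} ≤ 1), and let K_l = { (x_e) ∈ ℝ^{lΘ ∩ ℤ^n} : Σ_{e ∈ lΘ ∩ ℤ^n} a_{e,e} x_e² ≤ 1 }. Suppose there are positive constants C, D and a continuous function φ : Θ → ℝ such that | log(1/a_{e,e}) − l·φ(e/l) | ≤ C·log l + D for all l ≥ 1 and all e ∈ lΘ ∩ ℤ^n. Then lim_{l→∞} log #(K_l ∩ ℤ^{lΘ ∩ ℤ^n}) / l^{n+1} = (1/2) ∫_Θ φ(x) dx. -/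
/-!
Write `N = #(lΘ ∩ ℤ^n)`. The integer points of the diagonal ellipsoid `K_l` are sandwiched between
the integer boxes of half-widths `(N a_e)^{-1/2}` and `a_e^{-1/2}`, so their number is
`exp (½ ∑_e log (1 / a_e) + O(N log N))`. The hypothesis on `a` turns `½ ∑_e log (1 / a_e)` into
`(l / 2) ∑_e φ (e / l) + O(N log l)`, and `N = O(l^n)`. After division by `l^{n+1}` only the
Riemann sum `l^{-n} ∑_e φ (e / l)` survives; it tends to `∫_Θ φ` because the boundary of a convex
body is Lebesgue-null.
-/

open Filter MeasureTheory Topology Finset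
open scoped Pointwise

section LatticeRiemannSums

variable {ι : Type*} [Fintype ι]

-- `span ℤ (range (Pi.basisFun ℝ ι))` is Mathlib's copy of `ℤ^ι` inside `ℝ^ι`.
theorem mem_inv_smul_span_basisFun_iff {l : ℕ} [NeZero l] {x : ι → ℝ} :
    x ∈ (l : ℝ)⁻¹ • (Submodule.span ℤ (Set.range (Pi.basisFun ℝ ι)) : Set (ι → ℝ)) ↔
      ∃ e : ι → ℤ, (fun i => (e i : ℝ) / l) = x := by
  have hl : (l : ℝ) ≠ 0 := Nat.cast_ne_zero.mpr (NeZero.ne l)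
  rw [← Submodule.coe_pointwise_smul, SetLike.mem_coe,
    BoxIntegral.unitPartition.mem_smul_span_iff]
  refine ⟨fun h => ⟨fun i => (h i).choose, funext fun i => ?_⟩, ?_⟩
  · rw [div_eq_iff hl, ← eq_intCast (algebraMap ℤ ℝ), (h i).choose_spec, mul_comm]
  · rintro ⟨e, rfl⟩ i
    exact ⟨e i, by simp [mul_div_cancel₀ _ hl]⟩

theorem tsum_inter_inv_smul_span_basisFun_eq_sum {Θ : Set (ι → ℝ)} {S : Finset (ι → ℤ)} {l : ℕ}
    [NeZero l] (hS : ∀ e, e ∈ S ↔ (fun i => (e i : ℝ) / l) ∈ Θ) (F : (ι → ℝ) → ℝ) :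
    ∑' x : ↑(Θ ∩ (l : ℝ)⁻¹ • (Submodule.span ℤ (Set.range (Pi.basisFun ℝ ι)) : Set (ι → ℝ))),
      F x = ∑ e ∈ S, F (fun i => (e i : ℝ) / l) := by
  have hl : (l : ℝ) ≠ 0 := Nat.cast_ne_zero.mpr (NeZero.ne l)
  let g : S ≃ ↑(Θ ∩ (l : ℝ)⁻¹ •
      (Submodule.span ℤ (Set.range (Pi.basisFun ℝ ι)) : Set (ι → ℝ))) :=
    Equiv.ofBijective
      (fun e => ⟨fun i => (e.1 i : ℝ) / l, (hS e).1 e.2,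
        mem_inv_smul_span_basisFun_iff.mpr ⟨e, rfl⟩⟩)
      ⟨fun e e' h => Subtype.ext <| funext fun i => by
          simpa [div_left_inj' hl] using congrFun (congrArg Subtype.val h) i,
        fun ⟨x, hxΘ, hxL⟩ => by
          obtain ⟨e, rfl⟩ := mem_inv_smul_span_basisFun_iff.mp hxL
          exact ⟨⟨e, (hS e).2 hxΘ⟩, rfl⟩⟩
  rw [← g.tsum_eq, tsum_fintype, ← Finset.sum_coe_sort S]
  rfl

theorem tendsto_sum_latticePoints_div_pow {Θ : Set (ι → ℝ)} (hΘ : IsCompact Θ)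
    (hfr : volume (frontier Θ) = 0) {S : ℕ → Finset (ι → ℤ)}
    (hS : ∀ l : ℕ, 1 ≤ l → ∀ e, e ∈ S l ↔ (fun i => (e i : ℝ) / l) ∈ Θ)
    {φ : (ι → ℝ) → ℝ} (hφ : ContinuousOn φ Θ) :
    Tendsto (fun l : ℕ => (∑ e ∈ S l, φ (fun i => (e i : ℝ) / l)) / (l : ℝ) ^ Fintype.card ι)
      atTop (𝓝 (∫ x in Θ, φ x)) := by
  -- `tendsto_tsum_div_pow_atTop_integral` needs a continuous integrand: extend `φ` by Tietze.
  obtain ⟨ψ, hψ⟩ :=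
    ContinuousMap.exists_restrict_eq hΘ.isClosed ⟨Θ.domRestrict φ, hφ.domRestrict⟩
  have hψφ : ∀ x ∈ Θ, ψ x = φ x := fun x hx => DFunLike.congr_fun hψ ⟨x, hx⟩
  have hlim := tendsto_tsum_div_pow_atTop_integral Θ ψ ψ.continuous hΘ.isBounded
    hΘ.isClosed.measurableSet hfr
  rw [setIntegral_congr_fun hΘ.isClosed.measurableSet hψφ] at hlim
  refine hlim.congr' ?_
  filter_upwards [eventually_ge_atTop 1] with l hl
  have : NeZero l := ⟨by omega⟩
  rw [tsum_inter_inv_smul_span_basisFun_eq_sum (hS l hl)]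
  exact congrArg (· / _) (Finset.sum_congr rfl fun e he => hψφ _ ((hS l hl e).1 he))

theorem tendsto_card_latticePoints_div_pow {Θ : Set (ι → ℝ)} (hΘ : IsCompact Θ)
    (hfr : volume (frontier Θ) = 0) {S : ℕ → Finset (ι → ℤ)}
    (hS : ∀ l : ℕ, 1 ≤ l → ∀ e, e ∈ S l ↔ (fun i => (e i : ℝ) / l) ∈ Θ) :
    Tendsto (fun l : ℕ => ((S l).card : ℝ) / (l : ℝ) ^ Fintype.card ι)
      atTop (𝓝 (volume.real Θ)) := by
  simpa using tendsto_sum_latticePoints_div_pow hΘ hfr hS (φ := fun _ => 1) continuousOn_const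

end LatticeRiemannSums

theorem abs_le_inv_sqrt_iff {w x : ℝ} (hw : 0 < w) : |x| ≤ (√w)⁻¹ ↔ w * x ^ 2 ≤ 1 := by
  rw [← Real.sqrt_inv, ← Real.sqrt_sq_eq_abs, Real.sqrt_le_sqrt_iff (by positivity),
    ← mul_le_mul_iff_of_pos_left hw, mul_inv_cancel₀ hw.ne']

theorem Int.mem_Icc_neg_floor_iff {r : ℝ} {k : ℤ} : k ∈ Icc (-⌊r⌋) ⌊r⌋ ↔ |(k : ℝ)| ≤ r := by
  rw [Finset.mem_Icc, ← abs_le, ← Int.cast_abs, Int.le_floor]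

theorem Int.cast_card_Icc_neg_floor {r : ℝ} (hr : 0 ≤ r) :
    ((Icc (-⌊r⌋) ⌊r⌋).card : ℝ) = 2 * ⌊r⌋ + 1 := by
  have h0 : 0 ≤ ⌊r⌋ := Int.floor_nonneg.mpr hr
  exact_mod_cast (Int.card_Icc_of_le (-⌊r⌋) ⌊r⌋ (by omega)).trans (by ring)

theorem Int.le_card_Icc_neg_floor {r : ℝ} (hr : 0 ≤ r) : r ≤ (Icc (-⌊r⌋) ⌊r⌋).card := by
  rw [Int.cast_card_Icc_neg_floor hr]
  linarith [Int.lt_floor_add_one r, Int.cast_nonneg (R := ℝ) (Int.floor_nonneg.mpr hr)]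

theorem Int.card_Icc_neg_floor_le {r : ℝ} (hr : 1 ≤ r) :
    ((Icc (-⌊r⌋) ⌊r⌋).card : ℝ) ≤ 3 * r := by
  rw [Int.cast_card_Icc_neg_floor (by linarith)]
  linarith [Int.floor_le r]

section IntegerPointsInDiagonalEllipsoid

variable {κ : Type*} [Fintype κ]

section Box

variable [DecidableEq κ]

theorem Pi.mem_Icc_neg_floor_iff {r : κ → ℝ} {y : κ → ℤ} :
    y ∈ Icc (-fun e => ⌊r e⌋) (fun e => ⌊r e⌋) ↔ ∀ e, |(y e : ℝ)| ≤ r e := by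
  simp only [Finset.mem_Icc, Pi.le_def, Pi.neg_apply, ← forall_and]
  exact forall_congr' fun e => by rw [← Finset.mem_Icc, Int.mem_Icc_neg_floor_iff]

theorem Pi.cast_card_Icc_neg_floor (r : κ → ℝ) :
    ((Icc (-fun e => ⌊r e⌋) (fun e => ⌊r e⌋)).card : ℝ) =
      ∏ e, ((Icc (-⌊r e⌋) ⌊r e⌋).card : ℝ) := by
  rw [Pi.card_Icc, Nat.cast_prod]
  rfl

theorem setOf_sum_mul_sq_le_one_subset {w : κ → ℝ} (hw : ∀ e, 0 < w e) :
    {y : κ → ℤ | ∑ e, w e * (y e : ℝ) ^ 2 ≤ 1} ⊆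
      Icc (-fun e => ⌊(√(w e))⁻¹⌋) (fun e => ⌊(√(w e))⁻¹⌋) := fun y hy =>
  Pi.mem_Icc_neg_floor_iff.mpr fun e => (abs_le_inv_sqrt_iff (hw e)).mpr <|
    (single_le_sum (f := fun e => w e * (y e : ℝ) ^ 2)
      (fun e _ => mul_nonneg (hw e).le (sq_nonneg _)) (mem_univ e)).trans hy

end Box

theorem card_setOf_sum_mul_sq_le_one_le {w : κ → ℝ} (hw : ∀ e, 0 < w e ∧ w e ≤ 1) :
    (Nat.card {y : κ → ℤ | ∑ e, w e * (y e : ℝ) ^ 2 ≤ 1} : ℝ) ≤ ∏ e, 3 * (√(w e))⁻¹ := by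
  classical
  have hsub := setOf_sum_mul_sq_le_one_subset fun e => (hw e).1
  calc (Nat.card {y : κ → ℤ | ∑ e, w e * (y e : ℝ) ^ 2 ≤ 1} : ℝ)
      ≤ (Icc (-fun e => ⌊(√(w e))⁻¹⌋) (fun e => ⌊(√(w e))⁻¹⌋)).card := by
        exact_mod_cast (Nat.card_mono (Finset.finite_toSet _) hsub).trans_eq (by simp)
    _ ≤ ∏ e, 3 * (√(w e))⁻¹ := by
        rw [Pi.cast_card_Icc_neg_floor]
        refine prod_le_prod (fun e _ => Nat.cast_nonneg _) fun e _ =>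
          Int.card_Icc_neg_floor_le ?_
        exact (one_le_inv₀ (Real.sqrt_pos.mpr (hw e).1)).mpr (Real.sqrt_le_one.mpr (hw e).2)

theorem prod_le_card_setOf_sum_mul_sq_le_one {w : κ → ℝ} (hw : ∀ e, 0 < w e) :
    ∏ e, (√(Fintype.card κ * w e))⁻¹ ≤
      (Nat.card {y : κ → ℤ | ∑ e, w e * (y e : ℝ) ^ 2 ≤ 1} : ℝ) := by
  classical
  set N : ℝ := (Fintype.card κ : ℝ)
  have hbox : (Icc (-fun e => ⌊(√(N * w e))⁻¹⌋) (fun e => ⌊(√(N * w e))⁻¹⌋) : Set (κ → ℤ)) ⊆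
      {y : κ → ℤ | ∑ e, w e * (y e : ℝ) ^ 2 ≤ 1} := by
    intro y hy
    have hterm : ∀ e ∈ univ, w e * (y e : ℝ) ^ 2 ≤ N⁻¹ := fun e _ => by
      have hN : 0 < N := Nat.cast_pos.mpr (Fintype.card_pos_iff.mpr ⟨e⟩)
      have := (abs_le_inv_sqrt_iff (mul_pos hN (hw e))).mp (Pi.mem_Icc_neg_floor_iff.mp hy e)
      rw [← one_div, le_div_iff₀' hN]
      linarith
    calc ∑ e, w e * (y e : ℝ) ^ 2 ≤ ∑ _e : κ, N⁻¹ := sum_le_sum hterm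
      _ = N * N⁻¹ := by rw [sum_const, nsmul_eq_mul, card_univ]
      _ ≤ 1 := mul_inv_le_one
  have hfin := (Finset.finite_toSet _).subset (setOf_sum_mul_sq_le_one_subset hw)
  calc ∏ e, (√(N * w e))⁻¹
      ≤ (Icc (-fun e => ⌊(√(N * w e))⁻¹⌋) (fun e => ⌊(√(N * w e))⁻¹⌋)).card := by
        rw [Pi.cast_card_Icc_neg_floor]
        exact prod_le_prod (fun e _ => by positivity) fun e _ =>
          Int.le_card_Icc_neg_floor (by positivity)
    _ ≤ _ := by exact_mod_cast (Nat.card_mono hfin hbox).trans_eq' (by simp)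

theorem abs_log_card_setOf_sum_mul_sq_le_one_sub_le {w : κ → ℝ}
    (hw : ∀ e, 0 < w e ∧ w e ≤ 1) :
    |Real.log (Nat.card {y : κ → ℤ | ∑ e, w e * (y e : ℝ) ^ 2 ≤ 1}) -
        ∑ e, Real.log (1 / w e) / 2| ≤
      Fintype.card κ * (Real.log 3 + Real.log (Fintype.card κ)) := by
  set N : ℝ := (Fintype.card κ : ℝ)
  have hN : κ → 0 < N := fun e => Nat.cast_pos.mpr (Fintype.card_pos_iff.mpr ⟨e⟩)
  have hpos : ∀ e ∈ univ, 0 < (√(N * w e))⁻¹ := fun e _ => by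
    have := hN e; have := (hw e).1; positivity
  have hcard := prod_le_card_setOf_sum_mul_sq_le_one fun e => (hw e).1
  have hlower : ∑ e, Real.log (1 / w e) / 2 - N * Real.log N / 2 ≤
      Real.log (Nat.card {y : κ → ℤ | ∑ e, w e * (y e : ℝ) ^ 2 ≤ 1}) := by
    refine le_of_eq_of_le ?_ (Real.log_le_log (prod_pos hpos) hcard)
    have hterm : ∀ e ∈ univ, Real.log (√(N * w e))⁻¹ =
        Real.log (1 / w e) / 2 - Real.log N / 2 := fun e _ => by
      rw [Real.log_inv, Real.log_sqrt (mul_pos (hN e) (hw e).1).le,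
        Real.log_mul (hN e).ne' (hw e).1.ne', one_div, Real.log_inv]
      ring
    rw [Real.log_prod fun e he => (hpos e he).ne', sum_congr rfl hterm, sum_sub_distrib,
      sum_const, card_univ, nsmul_eq_mul]
    ring
  have hupper : Real.log (Nat.card {y : κ → ℤ | ∑ e, w e * (y e : ℝ) ^ 2 ≤ 1}) ≤
      N * Real.log 3 + ∑ e, Real.log (1 / w e) / 2 := by
    refine (Real.log_le_log ((prod_pos hpos).trans_le hcard)
      (card_setOf_sum_mul_sq_le_one_le hw)).trans_eq ?_
    have hterm : ∀ e ∈ univ, Real.log (3 * (√(w e))⁻¹) =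
        Real.log 3 + Real.log (1 / w e) / 2 := fun e _ => by
      have := (hw e).1
      rw [Real.log_mul (by norm_num) (by positivity), Real.log_inv, Real.log_sqrt this.le,
        one_div, Real.log_inv]
      ring
    rw [Real.log_prod fun e _ => by have := (hw e).1; positivity, sum_congr rfl hterm,
      sum_add_distrib, sum_const, card_univ, nsmul_eq_mul]
  have h3 : 0 ≤ Real.log 3 := Real.log_nonneg (by norm_num)
  have hlogN : 0 ≤ Real.log N := Real.log_natCast_nonneg _
  rw [abs_le]
  constructor <;> nlinarith [Nat.cast_nonneg (α := ℝ) (Fintype.card κ)]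

end IntegerPointsInDiagonalEllipsoid

theorem Nat.card_setOf_eq_zero_off_and {ι β : Type*} [Zero β] (S : Finset ι)
    (p : (S → β) → Prop) :
    Nat.card {x : ι → β | (∀ e ∉ S, x e = 0) ∧ p (fun e => x e)} =
      Nat.card {y : S → β | p y} := by
  classical
  refine Nat.card_congr
    { toFun := fun x => ⟨fun e => x.1 e, x.2.2⟩
      invFun := fun y => ⟨fun e => if h : e ∈ S then y.1 ⟨e, h⟩ else 0,
        fun e he => dif_neg he, by simp only [coe_mem, dite_true, Subtype.coe_eta]; exact y.2⟩
      left_inv := fun x => Subtype.ext <| funext fun e => ?_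
      right_inv := fun y => by simp }
  by_cases he : e ∈ S
  · simp [he]
  · simp [he, x.2.1 e he]

/-- `K ∩ ℤ^S` for `K = {x : ∑_{e ∈ S} a_e x_e² ≤ 1}`, tuples indexed by `S` being encoded as
functions vanishing off `S`. -/
def latticeEllipsoid {ι : Type*} (S : Finset ι) (a : ι → ℝ) : Set (ι → ℤ) :=
  {x | (∀ e ∉ S, x e = 0) ∧ ∑ e ∈ S, a e * (x e : ℝ) ^ 2 ≤ 1}

theorem abs_log_card_latticeEllipsoid_sub_le {ι : Type*} (S : Finset ι) {a b : ι → ℝ} {δ : ℝ}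
    (ha : ∀ e ∈ S, 0 < a e ∧ a e ≤ 1) (hb : ∀ e ∈ S, |Real.log (1 / a e) - b e| ≤ δ) :
    |Real.log (Nat.card (latticeEllipsoid S a)) - (∑ e ∈ S, b e) / 2| ≤
      S.card * (Real.log 3 + Real.log S.card + δ / 2) := by
  have hcount := abs_log_card_setOf_sum_mul_sq_le_one_sub_le (w := fun e : S => a e)
    fun e => ha e e.2
  rw [Fintype.card_coe, sum_coe_sort S (fun e => Real.log (1 / a e) / 2),
    ← Nat.card_setOf_eq_zero_off_and S (fun y => ∑ e : S, a e * ((y e : ℤ) : ℝ) ^ 2 ≤ 1)]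
    at hcount
  have hset : latticeEllipsoid S a =
      {x | (∀ e ∉ S, x e = 0) ∧ ∑ e : S, a e * (x e : ℝ) ^ 2 ≤ 1} :=
    Set.ext fun x => and_congr_right' (by rw [sum_coe_sort S (fun e => a e * (x e : ℝ) ^ 2)])
  have hsum : |∑ e ∈ S, Real.log (1 / a e) / 2 - (∑ e ∈ S, b e) / 2| ≤ S.card * (δ / 2) := by
    rw [sum_div, ← sum_sub_distrib]
    refine (abs_sum_le_sum_abs _ _).trans ?_
    calc ∑ e ∈ S, |Real.log (1 / a e) / 2 - b e / 2| ≤ ∑ _e ∈ S, δ / 2 :=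
          sum_le_sum fun e he => by
            rw [← sub_div, abs_div, abs_two]
            linarith [hb e he]
      _ = S.card * (δ / 2) := by rw [sum_const, nsmul_eq_mul]
  rw [hset]
  calc _ ≤ _ := abs_sub_le _ (∑ e ∈ S, Real.log (1 / a e) / 2) _
    _ ≤ _ := add_le_add hcount hsum
    _ = _ := by ring

theorem tendsto_log_natCast_div_natCast : Tendsto (fun l : ℕ => Real.log l / l) atTop (𝓝 0) :=
  Real.isLittleO_log_id_atTop.tendsto_div_nhds_zero.comp tendsto_natCast_atTop_atTop

theorem tendsto_log_natCast_div_of_tendsto_div_pow {u : ℕ → ℕ} {d : ℕ} {v : ℝ}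
    (hu : Tendsto (fun l : ℕ => (u l : ℝ) / (l : ℝ) ^ d) atTop (𝓝 v)) :
    Tendsto (fun l : ℕ => Real.log (u l) / l) atTop (𝓝 0) := by
  set K := |v| + 1
  have hlog : Tendsto (fun l : ℕ => Real.log K * (1 / l) + d * (Real.log l / l))
      atTop (𝓝 0) := by
    simpa using (tendsto_one_div_atTop_nhds_zero_nat.const_mul (Real.log K)).add
      (tendsto_log_natCast_div_natCast.const_mul (d : ℝ))
  refine squeeze_zero' (Eventually.of_forall fun l : ℕ =>
    div_nonneg (Real.log_natCast_nonneg _) (Nat.cast_nonneg _)) ?_ hlog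
  filter_upwards [eventually_ge_atTop 1,
    hu.eventually (gt_mem_nhds ((le_abs_self v).trans_lt (lt_add_one |v|)))] with l hl hul
  have hl0 : (0 : ℝ) < l := by exact_mod_cast hl
  have hK : 1 ≤ K := by simp [K]
  have hule : (u l : ℝ) ≤ K * (l : ℝ) ^ d := ((div_lt_iff₀ (by positivity)).mp hul).le
  have hlogu : Real.log (u l) ≤ Real.log K + d * Real.log l := by
    rw [← Real.log_pow, ← Real.log_mul (by positivity) (by positivity)]
    rcases (Nat.zero_le (u l)).eq_or_lt with h | h
    · rw [← h, Nat.cast_zero, Real.log_zero]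
      exact Real.log_nonneg (one_le_mul_of_one_le_of_one_le hK (one_le_pow₀ (by exact_mod_cast hl)))
    · exact Real.log_le_log (by exact_mod_cast h) hule
  calc Real.log (u l) / l ≤ (Real.log K + d * Real.log l) / l := by gcongr
    _ = _ := by ring

theorem abs_log_card_latticeEllipsoid_div_pow_sub_le {ι : Type*} (S : Finset ι) {a c : ι → ℝ}
    {δ : ℝ} {l : ℕ} (hl : 1 ≤ l) (d : ℕ) (ha : ∀ e ∈ S, 0 < a e ∧ a e ≤ 1)
    (hc : ∀ e ∈ S, |Real.log (1 / a e) - l * c e| ≤ δ) :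
    |Real.log (Nat.card (latticeEllipsoid S a)) / (l : ℝ) ^ (d + 1) -
        (∑ e ∈ S, c e) / (l : ℝ) ^ d / 2| ≤
      S.card / (l : ℝ) ^ d * ((Real.log 3 + Real.log S.card + δ / 2) / l) := by
  have hl0 : (0 : ℝ) < l := by exact_mod_cast hl
  have key := abs_log_card_latticeEllipsoid_sub_le S ha hc
  rw [← mul_sum] at key
  set X := Real.log (Nat.card (latticeEllipsoid S a))
  calc |X / (l : ℝ) ^ (d + 1) - (∑ e ∈ S, c e) / (l : ℝ) ^ d / 2|
      = |X - l * (∑ e ∈ S, c e) / 2| / (l : ℝ) ^ (d + 1) := by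
        rw [← abs_of_pos (pow_pos hl0 (d + 1)), ← abs_div, abs_of_pos (pow_pos hl0 (d + 1))]
        congr 1
        field_simp
        ring
    _ ≤ S.card * (Real.log 3 + Real.log S.card + δ / 2) / (l : ℝ) ^ (d + 1) := by gcongr
    _ = _ := by rw [pow_succ]; field_simp

theorem tendsto_count_lattice_points_diagonal_general (n : ℕ) (Θ : Set (Fin n → ℝ))
    (hΘc : IsCompact Θ) (hΘconv : Convex ℝ Θ)
    (S : ℕ → Finset (Fin n → ℤ))
    (hS : ∀ l : ℕ, 1 ≤ l → ∀ e : Fin n → ℤ,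
      e ∈ S l ↔ (fun i => (e i : ℝ) / (l : ℝ)) ∈ Θ)
    (a : ℕ → (Fin n → ℤ) → ℝ)
    (hdiag : ∀ l : ℕ, 1 ≤ l → ∀ e ∈ S l, 0 < a l e ∧ a l e ≤ 1)
    (C D : ℝ)
    (φ : (Fin n → ℝ) → ℝ) (hφ : ContinuousOn φ Θ)
    (hest : ∀ l : ℕ, 1 ≤ l → ∀ e ∈ S l,
      |Real.log (1 / a l e) - (l : ℝ) * φ (fun i => (e i : ℝ) / (l : ℝ))| ≤
        C * Real.log l + D) :
    Filter.Tendsto (fun l : ℕ =>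
        Real.log (Nat.card ↥{x : (Fin n → ℤ) → ℤ |
            (∀ e ∉ S l, x e = 0) ∧
            ∑ e ∈ S l, a l e * ((x e : ℝ)) ^ 2 ≤ 1}) /
          (l : ℝ) ^ (n + 1)) Filter.atTop
      (nhds ((1 / 2) * ∫ x in Θ, φ x)) := by
  change Tendsto (fun l : ℕ => Real.log (Nat.card (latticeEllipsoid (S l) (a l))) /
    (l : ℝ) ^ (n + 1)) atTop _
  have hfr := hΘconv.addHaar_frontier volume
  have hcard := tendsto_card_latticePoints_div_pow hΘc hfr hS
  have hriemann := tendsto_sum_latticePoints_div_pow hΘc hfr hS hφ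
  rw [Fintype.card_fin] at hcard hriemann
  have hε : Tendsto (fun l : ℕ =>
      (Real.log 3 + Real.log (S l).card + (C * Real.log l + D) / 2) / l) atTop (𝓝 0) := by
    convert ((tendsto_one_div_atTop_nhds_zero_nat.const_mul (Real.log 3 + D / 2)).add
      (tendsto_log_natCast_div_of_tendsto_div_pow hcard)).add
      (tendsto_log_natCast_div_natCast.const_mul (C / 2)) using 2
    · ring
    · simp
  set F : ℕ → ℝ := fun l =>
    Real.log (Nat.card (latticeEllipsoid (S l) (a l))) / (l : ℝ) ^ (n + 1)
  set R : ℕ → ℝ := fun l => (∑ e ∈ S l, φ (fun i => (e i : ℝ) / l)) / (l : ℝ) ^ n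
  have hdiff := squeeze_zero_norm' (f := fun l => F l - R l / 2)
    (eventually_ge_atTop 1 |>.mono fun l hl =>
      abs_log_card_latticeEllipsoid_div_pow_sub_le (S l) hl n (hdiag l hl) (hest l hl))
    (by simpa using hcard.mul hε)
  convert hdiff.add (hriemann.div_const 2) using 2 <;> ring

/-- Lemma 2.2 (second assertion): in the diagonal case with diagonal entries in
`(0, 1]`, the limit of the counting function of lattice points in `K_l` exists
and equals `(1/2)∫_Θ φ`.  Here `S l` is the finite set of lattice points
`e ∈ ℤ^n` with `e/l ∈ Θ` (i.e. `e ∈ lΘ`), `a l e` is the diagonal entry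
`a_{e,e}` of `A_l`, tuples indexed by `lΘ ∩ ℤ^n` are modelled as functions
`(Fin n → ℤ) → ℤ` vanishing outside `S l`, and `Nat.card` counts lattice
points of `K_l`. -/
theorem tendsto_count_lattice_points_diagonal (n : ℕ) (Θ : Set (Fin n → ℝ))
    (hΘc : IsCompact Θ) (hΘconv : Convex ℝ Θ)
    (hΘvol : 0 < MeasureTheory.volume Θ)
    (S : ℕ → Finset (Fin n → ℤ))
    (hS : ∀ l : ℕ, 1 ≤ l → ∀ e : Fin n → ℤ,
      e ∈ S l ↔ (fun i => (e i : ℝ) / (l : ℝ)) ∈ Θ)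
    (a : ℕ → (Fin n → ℤ) → ℝ)
    (hdiag : ∀ l : ℕ, 1 ≤ l → ∀ e ∈ S l, 0 < a l e ∧ a l e ≤ 1)
    (C D : ℝ) (hC : 0 < C) (hD : 0 < D)
    (φ : (Fin n → ℝ) → ℝ) (hφ : ContinuousOn φ Θ)
    (hest : ∀ l : ℕ, 1 ≤ l → ∀ e ∈ S l,
      |Real.log (1 / a l e) - (l : ℝ) * φ (fun i => (e i : ℝ) / (l : ℝ))| ≤
        C * Real.log l + D) :
    Filter.Tendsto (fun l : ℕ =>
        Real.log (Nat.card ↥{x : (Fin n → ℤ) → ℤ |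
            (∀ e ∉ S l, x e = 0) ∧
            ∑ e ∈ S l, a l e * ((x e : ℝ)) ^ 2 ≤ 1}) /
          (l : ℝ) ^ (n + 1)) Filter.atTop
      (nhds ((1 / 2) * ∫ x in Θ, φ x)) :=
  tendsto_count_lattice_points_diagonal_general n Θ hΘc hΘconv S hS a hdiag C D φ hφ hest
end

section
/- Let Θ = { (x, y, z) ∈ ℝ³ : 0 ≤ y ≤ 1, 0 ≤ z ≤ 1, x² ≤ y·z }. Then Θ is a compact convex subset of ℝ³; its projection under p(x,y,z) = (x,y) is p(Θ) = { (x,y) ∈ ℝ² : x² ≤ y ≤ 1 }; the function ϑ on p(Θ) defined by ϑ(x,y) = min{ z : (x,y,z) ∈ Θ } satisfies ϑ(x,y) = x²/y for (x,y) ≠ (0,0) and ϑ(0,0) = 0; and ϑ is not continuous at (0,0). -/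
/-- The set `Θ = {(x,y,z) : 0 ≤ y ≤ 1, 0 ≤ z ≤ 1, x² ≤ yz}` of the Remark
after Lemma 4.2. -/
def ThetaEx : Set (ℝ × ℝ × ℝ) :=
  {p | 0 ≤ p.2.1 ∧ p.2.1 ≤ 1 ∧ 0 ≤ p.2.2 ∧ p.2.2 ≤ 1 ∧ p.1 ^ 2 ≤ p.2.1 * p.2.2}

/-- The lower-boundary function `ϑ(x,y) = min{z : (x,y,z) ∈ Θ}` (as an
infimum; the theorem asserts it is attained). -/
noncomputable def lowerBdry (q : ℝ × ℝ) : ℝ :=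
  sInf {z : ℝ | (q.1, q.2, z) ∈ ThetaEx}

/-!
`Θ` is the rotated second-order cone `{x² ≤ yz, y, z ≥ 0}` cut by `y ≤ 1, z ≤ 1`, hence compact
and convex. Over a point `(x, y)` of the projection the fibre is `[x²/y, 1]`, so `ϑ(x, y) = x²/y`
(with Lean's `0 / 0 = 0` this also covers the origin). Along the parabola `y = x²` we get
`ϑ = 1`, while `ϑ(0, 0) = 0`.
-/

open Set Filter Topology

def rotatedLorentzCone : Set (ℝ × ℝ × ℝ) :=
  {p | 0 ≤ p.2.1 ∧ 0 ≤ p.2.2 ∧ p.1 ^ 2 ≤ p.2.1 * p.2.2}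

lemma two_mul_mul_le_of_sq_le_mul {x₁ y₁ z₁ x₂ y₂ z₂ : ℝ} (hy₁ : 0 ≤ y₁) (hz₁ : 0 ≤ z₁)
    (hy₂ : 0 ≤ y₂) (hz₂ : 0 ≤ z₂) (h₁ : x₁ ^ 2 ≤ y₁ * z₁) (h₂ : x₂ ^ 2 ≤ y₂ * z₂) :
    2 * (x₁ * x₂) ≤ y₁ * z₂ + y₂ * z₁ := by
  refine le_of_sq_le_sq ?_ (by positivity)
  calc (2 * (x₁ * x₂)) ^ 2 = 4 * (x₁ ^ 2 * x₂ ^ 2) := by ring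
    _ ≤ 4 * ((y₁ * z₂) * (y₂ * z₁)) := by
      have := mul_le_mul h₁ h₂ (sq_nonneg _) (by positivity)
      linarith
    _ ≤ (y₁ * z₂ + y₂ * z₁) ^ 2 := by nlinarith [sq_nonneg (y₁ * z₂ - y₂ * z₁)]

lemma convex_rotatedLorentzCone : Convex ℝ rotatedLorentzCone := by
  rintro ⟨x₁, y₁, z₁⟩ ⟨hy₁, hz₁, h₁⟩ ⟨x₂, y₂, z₂⟩ ⟨hy₂, hz₂, h₂⟩ a b ha hb -
  have hcross := two_mul_mul_le_of_sq_le_mul hy₁ hz₁ hy₂ hz₂ h₁ h₂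
  simp only [rotatedLorentzCone, mem_ofPred_eq, Prod.smul_mk, Prod.mk_add_mk, smul_eq_mul]
  refine ⟨by positivity, by positivity, ?_⟩
  calc (a * x₁ + b * x₂) ^ 2
      = a ^ 2 * x₁ ^ 2 + a * b * (2 * (x₁ * x₂)) + b ^ 2 * x₂ ^ 2 := by ring
    _ ≤ a ^ 2 * (y₁ * z₁) + a * b * (y₁ * z₂ + y₂ * z₁) + b ^ 2 * (y₂ * z₂) := by gcongr
    _ = (a * y₁ + b * y₂) * (a * z₁ + b * z₂) := by ring

lemma isClosed_rotatedLorentzCone : IsClosed rotatedLorentzCone := by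
  simp only [rotatedLorentzCone, ofPred_and]
  exact (isClosed_le continuous_const (by fun_prop)).inter
    ((isClosed_le continuous_const (by fun_prop)).inter (isClosed_le (by fun_prop) (by fun_prop)))

lemma thetaEx_eq_inter :
    ThetaEx = rotatedLorentzCone ∩ univ ×ˢ (Iic 1 ×ˢ Iic 1) := by
  ext p
  simp only [ThetaEx, rotatedLorentzCone, mem_inter_iff, mem_prod, mem_Iic, mem_univ,
    mem_ofPred_eq]
  tauto

lemma convex_thetaEx : Convex ℝ ThetaEx := by
  rw [thetaEx_eq_inter]
  exact convex_rotatedLorentzCone.inter (convex_univ.prod ((convex_Iic 1).prod (convex_Iic 1)))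

lemma isCompact_thetaEx : IsCompact ThetaEx := by
  have hclosed : IsClosed ThetaEx := by
    rw [thetaEx_eq_inter]
    exact isClosed_rotatedLorentzCone.inter (isClosed_univ.prod (isClosed_Iic.prod isClosed_Iic))
  refine (isCompact_Icc (a := ((-1 : ℝ), (0 : ℝ), (0 : ℝ))) (b := (1, 1, 1))).of_isClosed_subset
    hclosed ?_
  rintro ⟨x, y, z⟩ ⟨hy, hy₁, hz, hz₁, hxyz⟩
  have hx : |x| ≤ 1 := (sq_le_one_iff_abs_le_one x).mp (by nlinarith)
  rw [abs_le] at hx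
  exact ⟨⟨hx.1, hy, hz⟩, hx.2, hy₁, hz₁⟩

lemma image_thetaEx :
    (fun p : ℝ × ℝ × ℝ => (p.1, p.2.1)) '' ThetaEx = {q : ℝ × ℝ | q.1 ^ 2 ≤ q.2 ∧ q.2 ≤ 1} := by
  ext ⟨x, y⟩
  constructor
  · rintro ⟨⟨x, y, z⟩, ⟨hy, hy₁, -, hz₁, hxyz⟩, ⟨⟩⟩
    exact ⟨hxyz.trans (mul_le_of_le_one_right hy hz₁), hy₁⟩
  · rintro ⟨hxy, hy₁⟩
    exact ⟨(x, y, 1), ⟨(sq_nonneg x).trans hxy, hy₁, zero_le_one, le_rfl, by simpa⟩, rfl⟩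

lemma setOf_mem_thetaEx {x y : ℝ} (hxy : x ^ 2 ≤ y) (hy₁ : y ≤ 1) :
    {z : ℝ | (x, y, z) ∈ ThetaEx} = Icc (x ^ 2 / y) 1 := by
  have hy : 0 ≤ y := (sq_nonneg x).trans hxy
  ext z
  simp only [ThetaEx, mem_ofPred_eq, mem_Icc]
  rcases hy.eq_or_lt with rfl | hy
  · have hx : x = 0 := pow_eq_zero_iff two_ne_zero |>.mp (le_antisymm hxy (sq_nonneg x))
    subst hx
    simp
  · rw [div_le_iff₀ hy, mul_comm z y]
    constructor
    · rintro ⟨-, -, -, hz₁, hxyz⟩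
      exact ⟨hxyz, hz₁⟩
    · rintro ⟨hxyz, hz₁⟩
      exact ⟨hy.le, hy₁, nonneg_of_mul_nonneg_right ((sq_nonneg x).trans hxyz) hy, hz₁, hxyz⟩

lemma isLeast_setOf_mem_thetaEx {x y : ℝ} (hxy : x ^ 2 ≤ y) (hy₁ : y ≤ 1) :
    IsLeast {z : ℝ | (x, y, z) ∈ ThetaEx} (x ^ 2 / y) := by
  rw [setOf_mem_thetaEx hxy hy₁]
  exact isLeast_Icc (div_le_one_of_le₀ hxy ((sq_nonneg x).trans hxy))

lemma lowerBdry_eq {x y : ℝ} (hxy : x ^ 2 ≤ y) (hy₁ : y ≤ 1) : lowerBdry (x, y) = x ^ 2 / y :=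
  (isLeast_setOf_mem_thetaEx hxy hy₁).csInf_eq

lemma lowerBdry_zero : lowerBdry (0, 0) = 0 := by
  simpa using lowerBdry_eq (x := 0) (y := 0) (by simp) zero_le_one

lemma lowerBdry_parabola {t : ℝ} (ht : 0 < t) (ht₁ : t ≤ 1) : lowerBdry (t, t ^ 2) = 1 := by
  rw [lowerBdry_eq le_rfl (pow_le_one₀ ht.le ht₁), div_self (by positivity)]

lemma tendsto_parabola_nhdsWithin :
    Tendsto (fun t : ℝ => (t, t ^ 2)) (𝓝[>] 0)
      (𝓝[{q : ℝ × ℝ | q.1 ^ 2 ≤ q.2 ∧ q.2 ≤ 1}] (0, 0)) := by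
  refine tendsto_nhdsWithin_iff.mpr ⟨?_, ?_⟩
  · have : Continuous fun t : ℝ => (t, t ^ 2) := by fun_prop
    exact (this.tendsto' 0 (0, 0) (by simp)).mono_left nhdsWithin_le_nhds
  · filter_upwards [Ioc_mem_nhdsGT zero_lt_one] with t ⟨ht, ht₁⟩
    exact ⟨le_rfl, pow_le_one₀ ht.le ht₁⟩

lemma not_continuousWithinAt_lowerBdry :
    ¬ContinuousWithinAt lowerBdry {q : ℝ × ℝ | q.1 ^ 2 ≤ q.2 ∧ q.2 ≤ 1} (0, 0) := by
  intro hcont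
  have hlim := hcont.tendsto.comp tendsto_parabola_nhdsWithin
  rw [lowerBdry_zero] at hlim
  have hone : (fun t : ℝ => lowerBdry (t, t ^ 2)) =ᶠ[𝓝[>] 0] fun _ => 1 := by
    filter_upwards [Ioc_mem_nhdsGT zero_lt_one] with t ⟨ht, ht₁⟩
    exact lowerBdry_parabola ht ht₁
  exact one_ne_zero (tendsto_nhds_unique (tendsto_const_nhds.congr' hone.symm) hlim)

/-- The Remark after Lemma 4.2: `Θ` is a compact convex subset of `ℝ³`, its
projection `p(Θ)` under `p(x,y,z) = (x,y)` is `{(x,y) : x² ≤ y ≤ 1}`, the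
lower-boundary function `ϑ` is the minimum, is given by `ϑ(x,y) = x²/y` for
`(x,y) ≠ (0,0)` and `ϑ(0,0) = 0`, and `ϑ` is not continuous at `(0,0)`
(as a function on `p(Θ)`). -/
theorem lower_boundary_not_continuous :
    IsCompact ThetaEx ∧ Convex ℝ ThetaEx ∧
    ((fun p : ℝ × ℝ × ℝ => (p.1, p.2.1)) '' ThetaEx =
      {q : ℝ × ℝ | q.1 ^ 2 ≤ q.2 ∧ q.2 ≤ 1}) ∧
    (∀ q : ℝ × ℝ, q.1 ^ 2 ≤ q.2 → q.2 ≤ 1 →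
      IsLeast {z : ℝ | (q.1, q.2, z) ∈ ThetaEx} (lowerBdry q)) ∧
    (∀ q : ℝ × ℝ, q.1 ^ 2 ≤ q.2 → q.2 ≤ 1 → q ≠ (0, 0) →
      lowerBdry q = q.1 ^ 2 / q.2) ∧
    lowerBdry (0, 0) = 0 ∧
    ¬ContinuousWithinAt lowerBdry {q : ℝ × ℝ | q.1 ^ 2 ≤ q.2 ∧ q.2 ≤ 1} (0, 0) := by
  refine ⟨isCompact_thetaEx, convex_thetaEx, image_thetaEx, fun q hxy hy₁ => ?_,
    fun q hxy hy₁ _ => lowerBdry_eq hxy hy₁, lowerBdry_zero, not_continuousWithinAt_lowerBdry⟩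
  rw [lowerBdry_eq hxy hy₁]
  exact isLeast_setOf_mem_thetaEx hxy hy₁
end

section
/- Fix a = (a_0, a_1, …, a_n) ∈ ℝ_{>0}^{n+1} with a_0 + a_1 + ⋯ + a_n > 1. Let (b_1, …, b_n) be a boundary point of Θ_a (in ℝ^n) and set b_0 = 1 − b_1 − ⋯ − b_n. Assume that at most one of b_0, b_1, …, b_n is zero. Then Θ_a has a unique supporting hyperplane at (b_1, …, b_n). Moreover, if b_0 = 0 the supporting hyperplane is { x : x_1 + ⋯ + x_n = 1 }, and if b_i = 0 for some i with 1 ≤ i ≤ n the supporting hyperplane is { x : x_i = 0 }. -/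
/-- `Θ_a = {x ∈ Δ_n : φ_a(1 − x_1 − ⋯ − x_n, x_1, …, x_n) ≥ 0}`. -/
def Theta {n : ℕ} (a : Fin (n + 1) → ℝ) : Set (Fin n → ℝ) :=
  {x | (∀ i, 0 ≤ x i) ∧ ∑ i, x i ≤ 1 ∧
    0 ≤ charFn a (Fin.cons (1 - ∑ i, x i) x)}

/-- `H` is a supporting hyperplane of the set `Θ` at the point `b`:
`H = {x : Σ α_i x_i = β}` with `α ≠ 0`, `Θ ⊆ {x : Σ α_i x_i ≥ β}` and
`Σ α_i b_i = β`. -/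
def IsSuppHyp {n : ℕ} (Θ : Set (Fin n → ℝ)) (b : Fin n → ℝ)
    (H : Set (Fin n → ℝ)) : Prop :=
  ∃ α : Fin n → ℝ, ∃ β : ℝ, α ≠ 0 ∧
    H = {x | ∑ i, α i * x i = β} ∧
    Θ ⊆ {x | β ≤ ∑ i, α i * x i} ∧ ∑ i, α i * b i = β

open Real Filter Topology Matrix

lemma exists_eq_smul_of_dotProduct_pos_imp_nonneg {ι : Type*} [Fintype ι] {α ν : ι → ℝ}
    (hν : ν ≠ 0) (h : ∀ v, 0 < ν ⬝ᵥ v → 0 ≤ α ⬝ᵥ v) : ∃ c : ℝ, α = c • ν := by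
  have hνν : 0 < ν ⬝ᵥ ν := by simpa using dotProduct_self_star_pos_iff.2 hν
  set c := α ⬝ᵥ ν / ν ⬝ᵥ ν
  set w := α - c • ν
  have hνw : ν ⬝ᵥ w = 0 := by
    simp only [w, c, dotProduct_sub, dotProduct_smul, smul_eq_mul, dotProduct_comm ν α,
      div_mul_cancel₀ _ hνν.ne', sub_self]
  have hαw : α ⬝ᵥ w = w ⬝ᵥ w := by
    rw [← sub_eq_zero, ← sub_dotProduct, show α - w = c • ν from sub_sub_cancel α _,
      smul_dotProduct, hνw, smul_zero]
  -- Testing `h` on `ν - s • w` for large `s` forces the part of `α` orthogonal to `ν` to vanish.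
  have hww : w ⬝ᵥ w ≤ 0 := by
    by_contra! hpos
    have := h (ν - ((α ⬝ᵥ ν + 1) / w ⬝ᵥ w) • w) (by simpa [dotProduct_sub, hνw] using hνν)
    rw [dotProduct_sub, dotProduct_smul, smul_eq_mul, hαw, div_mul_cancel₀ _ hpos.ne'] at this
    linarith
  have hw : w = 0 :=
    dotProduct_self_eq_zero.1 (hww.antisymm (Finset.sum_nonneg fun i _ => mul_self_nonneg _))
  exact ⟨c, sub_eq_zero.1 hw⟩

lemma negMulLog_le_tangent {y p : ℝ} (hy : 0 ≤ y) (hp : 0 < p) :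
    negMulLog y ≤ negMulLog p + (-log p - 1) * (y - p) := by
  have hmul := negMulLog_mul p (y / p)
  rw [mul_div_cancel₀ _ hp.ne'] at hmul
  have hle := mul_le_mul_of_nonneg_left (negMulLog_le_one_sub_self (div_nonneg hy hp.le)) hp.le
  rw [hmul]
  simp only [negMulLog] at hle ⊢
  field_simp at hle ⊢
  linarith

lemma eventually_lt_of_eventually_slope_pos {f : ℝ → ℝ} {x : ℝ}
    (h : ∀ᶠ t in 𝓝[>] x, 0 < slope f x t) : ∀ᶠ t in 𝓝[>] x, f x < f t := by
  filter_upwards [h, self_mem_nhdsWithin] with t hslope ht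
  rw [slope_def_field, div_pos_iff_of_pos_right (sub_pos.2 ht), sub_pos] at hslope
  exact hslope

lemma eventually_nonneg_add_mul {p v : ℝ} (hp : 0 ≤ p) (h : 0 < p ∨ 0 < v) :
    ∀ᶠ t in 𝓝[>] (0 : ℝ), 0 ≤ p + t * v := by
  rcases h with hp' | hv
  · have hlim : Tendsto (fun t : ℝ => p + t * v) (𝓝[>] 0) (𝓝 p) :=
      tendsto_nhdsWithin_of_tendsto_nhds ((continuous_const.add
        (continuous_id.mul continuous_const)).tendsto' 0 p (by simp))
    exact (hlim.eventually (eventually_gt_nhds hp')).mono fun t ht => ht.le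
  · filter_upwards [self_mem_nhdsWithin] with t ht
    exact add_nonneg hp (mul_nonneg (le_of_lt ht) hv.le)

lemma hasDerivAt_sum_negMulLog_line {ι : Type*} (s : Finset ι) (a B V : ι → ℝ)
    (hB : ∀ i ∈ s, 0 < B i) :
    HasDerivAt (fun t => ∑ i ∈ s, (negMulLog (B i + t * V i) + (B i + t * V i) * log (a i)))
      (∑ i ∈ s, (log (a i) - log (B i) - 1) * V i) 0 := by
  refine HasDerivAt.fun_sum fun i hi => ?_
  have hline : HasDerivAt (fun t : ℝ => B i + t * V i) (V i) 0 := by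
    simpa using (hasDerivAt_mul_const (V i)).const_add (B i)
  have hneg := (hasDerivAt_negMulLog (hB i hi).ne').comp_of_eq (0 : ℝ) hline (by simp)
  exact (hneg.add (hline.mul_const (log (a i)))).congr_deriv (by ring)

section

variable {n : ℕ}

lemma isSuppHyp_iff {Θ : Set (Fin n → ℝ)} {b : Fin n → ℝ} {H : Set (Fin n → ℝ)} :
    IsSuppHyp Θ b H ↔ ∃ α : Fin n → ℝ, ∃ β : ℝ, α ≠ 0 ∧
      H = {x | α ⬝ᵥ x = β} ∧ Θ ⊆ {x | β ≤ α ⬝ᵥ x} ∧ α ⬝ᵥ b = β :=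
  Iff.rfl

lemma existsUnique_isSuppHyp {Θ : Set (Fin n → ℝ)} {b ν : Fin n → ℝ} (hν : ν ≠ 0)
    (hsupp : ∀ x ∈ Θ, ν ⬝ᵥ b ≤ ν ⬝ᵥ x)
    (htan : ∀ v, 0 < ν ⬝ᵥ v → ∃ t > (0 : ℝ), b + t • v ∈ Θ) :
    ∃! H, IsSuppHyp Θ b H := by
  refine ⟨{x | ν ⬝ᵥ x = ν ⬝ᵥ b}, isSuppHyp_iff.2 ⟨ν, _, hν, rfl, hsupp, rfl⟩, ?_⟩
  intro H hH
  obtain ⟨α, β, hα, rfl, hΘ, rfl⟩ := isSuppHyp_iff.1 hH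
  have hcone : ∀ v, 0 < ν ⬝ᵥ v → 0 ≤ α ⬝ᵥ v := fun v hv => by
    obtain ⟨t, ht, hmem⟩ := htan v hv
    have : α ⬝ᵥ b ≤ α ⬝ᵥ (b + t • v) := hΘ hmem
    rw [dotProduct_add, dotProduct_smul, smul_eq_mul, le_add_iff_nonneg_right] at this
    exact (mul_nonneg_iff_of_pos_left ht).1 this
  obtain ⟨c, rfl⟩ := exists_eq_smul_of_dotProduct_pos_imp_nonneg hν hcone
  have hc : c ≠ 0 := by
    rintro rfl
    exact hα (zero_smul ℝ ν)
  ext x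
  simp only [Set.mem_ofPred_eq, smul_dotProduct, smul_eq_mul, mul_right_inj' hc]

lemma isSuppHyp_coord_eq_zero {Θ : Set (Fin n → ℝ)} {b : Fin n → ℝ} {i : Fin n}
    (hΘ : ∀ x ∈ Θ, 0 ≤ x i) (hb : b i = 0) : IsSuppHyp Θ b {x | x i = 0} := by
  refine isSuppHyp_iff.2 ⟨Pi.single i 1, 0, by simp, ?_, fun x hx => ?_, ?_⟩
  · ext x
    simp [single_dotProduct]
  · simpa [single_dotProduct] using hΘ x hx
  · simp [single_dotProduct, hb]

lemma isSuppHyp_sum_eq_one {Θ : Set (Fin n → ℝ)} {b : Fin n → ℝ}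
    (hΘ : ∀ x ∈ Θ, ∑ i, x i ≤ 1) (hb : ∑ i, b i = 1) : IsSuppHyp Θ b {x | ∑ i, x i = 1} := by
  have : Nonempty (Fin n) := by
    by_contra h
    simp [not_nonempty_iff.1 h] at hb
  refine isSuppHyp_iff.2 ⟨-1, -1, by simp, ?_, fun x hx => ?_, ?_⟩
  · ext x
    simp [neg_dotProduct, one_dotProduct]
  · simpa [neg_dotProduct, one_dotProduct] using hΘ x hx
  · simp [neg_dotProduct, one_dotProduct, hb]

def baryCoords (x : Fin n → ℝ) : Fin (n + 1) → ℝ := Fin.cons (1 - ∑ i, x i) x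

def baryDir (v : Fin n → ℝ) : Fin (n + 1) → ℝ := Fin.cons (-∑ i, v i) v

lemma baryCoords_add (x v : Fin n → ℝ) : baryCoords (x + v) = baryCoords x + baryDir v := by
  ext j
  refine Fin.cases ?_ (fun i => ?_) j
  · simp only [baryCoords, baryDir, Fin.cons_zero, Pi.add_apply, Finset.sum_add_distrib]
    ring
  · simp [baryCoords, baryDir]

lemma baryDir_smul (t : ℝ) (v : Fin n → ℝ) : baryDir (t • v) = t • baryDir v := by
  ext j
  refine Fin.cases ?_ (fun i => ?_) j
  · simp [baryDir, ← Finset.mul_sum]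
  · simp [baryDir]

lemma baryCoords_sub (x y : Fin n → ℝ) : baryCoords x - baryCoords y = baryDir (x - y) := by
  rw [sub_eq_iff_eq_add', ← baryCoords_add, add_sub_cancel]

lemma sum_baryCoords (x : Fin n → ℝ) : ∑ j, baryCoords x j = 1 := by
  simp [baryCoords, Fin.sum_cons]

lemma continuous_baryCoords : Continuous (baryCoords (n := n)) :=
  Continuous.finCons (by fun_prop : Continuous fun x : Fin n → ℝ => 1 - ∑ i, x i) continuous_id

lemma dotProduct_baryDir (c : Fin (n + 1) → ℝ) (v : Fin n → ℝ) :
    c ⬝ᵥ baryDir v = (Fin.tail c - fun _ => c 0) ⬝ᵥ v := by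
  simp only [dotProduct, Fin.sum_univ_succ, baryDir, Fin.cons_zero, Fin.cons_succ, Fin.tail,
    Pi.sub_apply, sub_mul, Finset.sum_sub_distrib, ← Finset.mul_sum]
  ring

lemma tail_sub_const_eq_zero_iff (c : Fin (n + 1) → ℝ) :
    (Fin.tail c - fun _ => c 0) = 0 ↔ ∀ j, c j = c 0 := by
  simp only [funext_iff, sub_eq_zero, Fin.forall_fin_succ, Fin.tail, true_and]

lemma charFn_eq_sum (a x : Fin (n + 1) → ℝ) :
    charFn a x = ∑ i, (negMulLog (x i) + x i * log (a i)) := by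
  simp [charFn, negMulLog, Finset.sum_add_distrib]

lemma continuous_charFn (a : Fin (n + 1) → ℝ) : Continuous (charFn a) := by
  simp_rw [funext (charFn_eq_sum a)]
  fun_prop

lemma mem_Theta_iff {a : Fin (n + 1) → ℝ} {x : Fin n → ℝ} :
    x ∈ Theta a ↔ (∀ j, 0 ≤ baryCoords x j) ∧ 0 ≤ charFn a (baryCoords x) := by
  simp only [Theta, Set.mem_ofPred_eq, Fin.forall_fin_succ, baryCoords, Fin.cons_zero,
    Fin.cons_succ, sub_nonneg]
  tauto

lemma isClosed_Theta (a : Fin (n + 1) → ℝ) : IsClosed (Theta a) := by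
  have hΘ : Theta a = (⋂ j, {x | 0 ≤ baryCoords x j}) ∩ {x | 0 ≤ charFn a (baryCoords x)} := by
    ext x
    simp [mem_Theta_iff]
  rw [hΘ]
  exact (isClosed_iInter fun j => isClosed_le continuous_const
    ((continuous_apply j).comp continuous_baryCoords)).inter
    (isClosed_le continuous_const ((continuous_charFn a).comp continuous_baryCoords))

lemma mem_interior_Theta {a : Fin (n + 1) → ℝ} {b : Fin n → ℝ}
    (hpos : ∀ j, 0 < baryCoords b j) (hφ : 0 < charFn a (baryCoords b)) :
    b ∈ interior (Theta a) := by
  rw [mem_interior_iff_mem_nhds]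
  have hcoords : ∀ᶠ x in 𝓝 b, ∀ j, 0 < baryCoords x j :=
    eventually_all.2 fun j => continuousAt_const.eventually_lt
      ((continuous_apply j).comp continuous_baryCoords).continuousAt (hpos j)
  have hcharFn : ∀ᶠ x in 𝓝 b, 0 < charFn a (baryCoords x) :=
    continuousAt_const.eventually_lt
      ((continuous_charFn a).comp continuous_baryCoords).continuousAt hφ
  filter_upwards [hcoords, hcharFn] with x hx hxφ
  exact mem_Theta_iff.2 ⟨fun j => (hx j).le, hxφ.le⟩

lemma exists_add_smul_mem_Theta {a : Fin (n + 1) → ℝ} {b v : Fin n → ℝ}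
    (hb : ∀ j, 0 ≤ baryCoords b j) (hdir : ∀ j, 0 < baryCoords b j ∨ 0 < baryDir v j)
    (hφ : ∀ᶠ t in 𝓝[>] (0 : ℝ), 0 ≤ charFn a (baryCoords b + t • baryDir v)) :
    ∃ t > (0 : ℝ), b + t • v ∈ Theta a := by
  have hcoords : ∀ᶠ t in 𝓝[>] (0 : ℝ), ∀ j, 0 ≤ (baryCoords b + t • baryDir v) j :=
    eventually_all.2 fun j => by simpa using eventually_nonneg_add_mul (hb j) (hdir j)
  obtain ⟨t, ⟨htc, htφ⟩, ht⟩ := ((hcoords.and hφ).and self_mem_nhdsWithin).exists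
  refine ⟨t, ht, mem_Theta_iff.2 ?_⟩
  rw [baryCoords_add, baryDir_smul]
  exact ⟨htc, htφ⟩

noncomputable def gradCharFn (a B : Fin (n + 1) → ℝ) : Fin (n + 1) → ℝ :=
  fun j => log (a j) - log (B j) - 1

lemma charFn_le_add_gradCharFn {a B X : Fin (n + 1) → ℝ} (hB : ∀ j, 0 < B j)
    (hX : ∀ j, 0 ≤ X j) : charFn a X ≤ charFn a B + gradCharFn a B ⬝ᵥ (X - B) := by
  rw [charFn_eq_sum, charFn_eq_sum, dotProduct, ← Finset.sum_add_distrib]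
  refine Finset.sum_le_sum fun j _ => ?_
  have := negMulLog_le_tangent (hX j) (hB j)
  simp only [gradCharFn, Pi.sub_apply]
  linarith

lemma hasDerivAt_charFn_line {a B : Fin (n + 1) → ℝ} (V : Fin (n + 1) → ℝ) (hB : ∀ j, 0 < B j) :
    HasDerivAt (fun t : ℝ => charFn a (B + t • V)) (gradCharFn a B ⬝ᵥ V) 0 := by
  simp only [charFn_eq_sum, Pi.add_apply, Pi.smul_apply, smul_eq_mul]
  exact hasDerivAt_sum_negMulLog_line _ a B V fun j _ => hB j

/-- The `j`-th term contributes `negMulLog (t * V j) / t ≈ -V j * log t → ∞` to the slope. -/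
lemma tendsto_slope_charFn_line {a B V : Fin (n + 1) → ℝ} {j : Fin (n + 1)} (hBj : B j = 0)
    (hB : ∀ i ≠ j, 0 < B i) (hV : 0 < V j) :
    Tendsto (slope (fun t : ℝ => charFn a (B + t • V)) 0) (𝓝[>] 0) atTop := by
  set G : ℝ → ℝ := fun t => ∑ i ∈ Finset.univ.erase j,
    (negMulLog (B i + t * V i) + (B i + t * V i) * log (a i))
  have hG : HasDerivAt G _ 0 :=
    hasDerivAt_sum_negMulLog_line _ a B V fun i hi => hB i (Finset.ne_of_mem_erase hi)
  have hsplit : ∀ t, charFn a (B + t • V) = t * (V j * (log (a j) - log (V j)) - V j * log t)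
      + G t := by
    intro t
    rw [charFn_eq_sum, ← Finset.add_sum_erase _ _ (Finset.mem_univ j)]
    simp only [Pi.add_apply, Pi.smul_apply, smul_eq_mul, hBj, zero_add, negMulLog_mul, G]
    simp only [negMulLog]
    ring
  have hlog : Tendsto (fun t => V j * (log (a j) - log (V j)) - V j * log t) (𝓝[>] 0) atTop :=
    tendsto_atTop_add_const_left _ _ <|
      ((tendsto_neg_atTop_iff.2 tendsto_log_nhdsGT_zero).const_mul_atTop hV).congr fun t => by ring
  refine (hlog.atTop_add ((hasDerivAt_iff_tendsto_slope.1 hG).mono_left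
    (nhdsWithin_mono _ fun t ht => ne_of_gt ht))).congr' ?_
  filter_upwards [self_mem_nhdsWithin] with t ht
  have ht : t ≠ 0 := ne_of_gt ht
  simp only [slope_def_field, hsplit]
  field_simp
  ring

lemma eq_of_gradCharFn_eq_const {a B : Fin (n + 1) → ℝ} (ha : ∀ j, 0 < a j)
    (hB : ∀ j, 0 < B j) (hB1 : ∑ j, B j = 1) (hφ : charFn a B = 0)
    (hc : ∀ j, gradCharFn a B j = gradCharFn a B 0) : a = B := by
  have hφ' : charFn a B = gradCharFn a B 0 + 1 := calc
    charFn a B = ∑ j, B j * (gradCharFn a B j + 1) := by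
      simp only [charFn, gradCharFn, sub_add_cancel, mul_sub, Finset.sum_sub_distrib]
      ring
    _ = ∑ j, B j * (gradCharFn a B 0 + 1) := Finset.sum_congr rfl fun j _ => by rw [hc j]
    _ = gradCharFn a B 0 + 1 := by rw [← Finset.sum_mul, hB1, one_mul]
  funext j
  have hj : gradCharFn a B j = -1 := by linarith [hc j]
  simp only [gradCharFn] at hj
  exact log_injOn_pos (ha j) (hB j) (by linarith)

theorem existsUnique_isSuppHyp_of_baryCoords_pos {a : Fin (n + 1) → ℝ} {b : Fin n → ℝ}
    (ha : ∀ i, 0 < a i) (hsum : 1 < ∑ i, a i) (hb : b ∈ frontier (Theta a))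
    (hpos : ∀ j, 0 < baryCoords b j) : ∃! H, IsSuppHyp (Theta a) b H := by
  have hbΘ := mem_Theta_iff.1 ((isClosed_Theta a).frontier_subset hb)
  have hφ : charFn a (baryCoords b) = 0 :=
    le_antisymm (not_lt.1 fun h => hb.2 (mem_interior_Theta hpos h)) hbΘ.2
  set c := gradCharFn a (baryCoords b)
  refine existsUnique_isSuppHyp (ν := Fin.tail c - fun _ => c 0) ?_ (fun x hx => ?_)
    (fun v hv => ?_)
  · rw [Ne, tail_sub_const_eq_zero_iff]
    intro hc
    rw [eq_of_gradCharFn_eq_const ha hpos (sum_baryCoords b) hφ hc, sum_baryCoords] at hsum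
    exact lt_irrefl _ hsum
  · have := charFn_le_add_gradCharFn (a := a) hpos (mem_Theta_iff.1 hx).1
    rw [hφ, baryCoords_sub, dotProduct_baryDir, dotProduct_sub] at this
    linarith [(mem_Theta_iff.1 hx).2]
  · rw [← dotProduct_baryDir] at hv
    refine exists_add_smul_mem_Theta hbΘ.1 (fun j => .inl (hpos j)) ?_
    have hslope := (hasDerivAt_iff_tendsto_slope.1 (hasDerivAt_charFn_line (a := a) (baryDir v)
      hpos)).mono_left (nhdsWithin_mono _ fun t ht => ne_of_gt ht)
    filter_upwards [eventually_lt_of_eventually_slope_pos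
      (hslope.eventually (eventually_gt_nhds hv))] with t ht
    simpa [hφ] using ht.le

theorem existsUnique_isSuppHyp_of_baryCoords_eq_zero {a : Fin (n + 1) → ℝ} {b : Fin n → ℝ}
    (hb : b ∈ Theta a) {j : Fin (n + 1)} (hj : baryCoords b j = 0)
    (hpos : ∀ i ≠ j, 0 < baryCoords b i) : ∃! H, IsSuppHyp (Theta a) b H := by
  set e : Fin (n + 1) → ℝ := Pi.single j 1
  have he : ∀ V, e ⬝ᵥ V = V j := fun V => by simp [e, single_dotProduct]
  obtain ⟨i, hij⟩ : ∃ i, i ≠ j := by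
    by_contra! h
    have := sum_baryCoords b
    rw [Fintype.sum_eq_single j fun i hi => absurd (h i) hi, hj] at this
    exact zero_ne_one this
  refine existsUnique_isSuppHyp (ν := Fin.tail e - fun _ => e 0) ?_ (fun x hx => ?_)
    (fun v hv => ?_)
  · rw [Ne, tail_sub_const_eq_zero_iff]
    intro hc
    have := (hc i).trans (hc j).symm
    simp [e, hij] at this
  · rw [← sub_nonneg, ← dotProduct_sub, ← dotProduct_baryDir, ← baryCoords_sub, he,
      Pi.sub_apply, hj, sub_zero]
    exact (mem_Theta_iff.1 hx).1 j
  · rw [← dotProduct_baryDir, he] at hv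
    refine exists_add_smul_mem_Theta (mem_Theta_iff.1 hb).1 (fun k => ?_) ?_
    · rcases eq_or_ne k j with rfl | hk
      exacts [.inr hv, .inl (hpos k hk)]
    · filter_upwards [eventually_lt_of_eventually_slope_pos
        ((tendsto_slope_charFn_line (a := a) hj hpos hv).eventually_gt_atTop 0)] with t ht
      rw [zero_smul, add_zero] at ht
      exact (mem_Theta_iff.1 hb).2.trans ht.le

end

/-- Proposition 4.3: if `Σ a_i > 1` and at most one of `b_0, b_1, …, b_n` is
zero at a boundary point `b` of `Θ_a` (with `b_0 = 1 − b_1 − ⋯ − b_n`), then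
`Θ_a` has a unique supporting hyperplane at `b`.  Moreover if `b_0 = 0` it is
`{x : Σ x_i = 1}`, and if `b_i = 0` for some `1 ≤ i ≤ n` it is `{x : x_i = 0}`. -/
theorem unique_supporting_hyperplane (n : ℕ) (a : Fin (n + 1) → ℝ)
    (ha : ∀ i, 0 < a i) (hsum : 1 < ∑ i, a i)
    (b : Fin n → ℝ) (hb : b ∈ frontier (Theta a))
    (hzero : Set.ncard {i : Fin (n + 1) | (Fin.cons (1 - ∑ j, b j) b : Fin (n + 1) → ℝ) i = 0} ≤ 1) :
    (∃! H : Set (Fin n → ℝ), IsSuppHyp (Theta a) b H) ∧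
    (1 - ∑ i, b i = 0 →
      IsSuppHyp (Theta a) b {x | ∑ i, x i = 1}) ∧
    (∀ i : Fin n, b i = 0 →
      IsSuppHyp (Theta a) b {x | x i = 0}) := by
  have hbΘ : b ∈ Theta a := (isClosed_Theta a).frontier_subset hb
  refine ⟨?_, fun h => isSuppHyp_sum_eq_one (fun x hx => hx.2.1) (by linarith),
    fun i hi => isSuppHyp_coord_eq_zero (fun x hx => hx.1 i) hi⟩
  have hnonneg := (mem_Theta_iff.1 hbΘ).1
  by_cases hz : ∃ j, baryCoords b j = 0
  · obtain ⟨j, hj⟩ := hz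
    refine existsUnique_isSuppHyp_of_baryCoords_eq_zero hbΘ hj fun i hi =>
      (hnonneg i).lt_of_ne' fun h0 => hi ?_
    exact (Set.ncard_le_one_iff).1 hzero h0 hj
  · push Not at hz
    exact existsUnique_isSuppHyp_of_baryCoords_pos ha hsum hb fun j =>
      (hnonneg j).lt_of_ne' (hz j)
end
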